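/- arXiv:2308.08645 — 5 statements merged into one kernel-verified Lean document; each statement's English description precedes it below -/
import Mathlib

section
/- Let a : [0,1] → ℝ be of class C^1 with a(0) = 0, a > 0 on (0,1], and suppose K := sup_{x∈(0,1]} x|a'(x)|/a(x) ≥ 1. Then 1/a ∉ L^1(0,1). -/
/-- If `a` is C¹ on [0,1], a(0)=0, a>0 on (0,1], and K = sup x|a'|/a ≥ 1,
then 1/a ∉ L¹(0,1). -/
theorem strongly_degenerate_one_div_not_integrable (a a' : ℝ → ℝ) (K : ℝ)
    (ha_diff : ∀ x ∈ Set.Icc (0:ℝ) 1, HasDerivWithinAt a (a' x) (Set.Icc 0 1) x)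
    (ha'_cont : ContinuousOn a' (Set.Icc 0 1))
    (ha0 : a 0 = 0)
    (ha_pos : ∀ x ∈ Set.Ioc (0:ℝ) 1, 0 < a x)
    (hK : IsLUB {y : ℝ | ∃ x ∈ Set.Ioc (0:ℝ) 1, y = x * |a' x| / a x} K)
    (hK1 : 1 ≤ K) :
    ¬ MeasureTheory.IntegrableOn (fun x => 1 / a x) (Set.Ioc 0 1) := by
  intro h
  -- a' is bounded on the compact set [0,1]
  obtain ⟨M, hM⟩ : ∃ M : ℝ, ∀ x ∈ Set.Icc (0:ℝ) 1, ‖a' x‖ ≤ M := by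
    obtain ⟨M, hM⟩ := (isCompact_Icc.image_of_continuousOn ha'_cont).isBounded.subset_closedBall 0
    exact ⟨M, fun x hx => by simpa [Real.norm_eq_abs, abs_sub_comm] using
      (hM (Set.mem_image_of_mem a' hx) : _)⟩
  have hM0 : 0 < M + 1 := by
    have := hM 0 (by norm_num); have := norm_nonneg (a' 0); linarith
  have hMle : ∀ x ∈ Set.Icc (0:ℝ) 1, ‖a' x‖ ≤ M + 1 := fun x hx => (hM x hx).trans (by linarith)
  -- a x ≤ (M+1) x on [0,1]
  have hbound : ∀ x ∈ Set.Icc (0:ℝ) 1, a x ≤ (M + 1) * x := by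
    intro x hx
    have := (convex_Icc (0:ℝ) 1).norm_image_sub_le_of_norm_hasDerivWithin_le
      ha_diff hMle (by norm_num : (0:ℝ) ∈ Set.Icc (0:ℝ) 1) hx
    rw [ha0, sub_zero, sub_zero, Real.norm_eq_abs, Real.norm_eq_abs,
      abs_of_nonneg hx.1] at this
    exact (le_abs_self _).trans this
  -- hence x⁻¹ ≤ (M+1) / a x on (0,1], so x⁻¹ is integrable on (0,1], contradiction
  have hinv : MeasureTheory.IntegrableOn (fun x : ℝ => x⁻¹) (Set.Ioc 0 1) := by
    refine MeasureTheory.Integrable.mono' (h.const_mul (M + 1)) ?_ ?_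
    · exact (measurable_inv.aestronglyMeasurable).restrict
    · rw [MeasureTheory.ae_restrict_iff' measurableSet_Ioc]
      refine MeasureTheory.ae_of_all _ fun x hx => ?_
      have hx0 : 0 < x := hx.1
      have hax : 0 < a x := ha_pos x hx
      rw [Real.norm_eq_abs, abs_of_nonneg (inv_nonneg.2 hx0.le)]
      have h1 : a x ≤ (M + 1) * x := hbound x ⟨hx0.le, hx.2⟩
      rw [one_div, ← div_eq_mul_inv, le_div_iff₀ hax, inv_mul_eq_div, div_le_iff₀ hx0]
      linarith
  have : IntervalIntegrable (fun x : ℝ => x⁻¹) MeasureTheory.volume 0 1 := by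
    rw [intervalIntegrable_iff_integrableOn_Ioc_of_le (by norm_num)]
    exact hinv
  rw [intervalIntegrable_inv_iff] at this
  rcases this with h1 | h1
  · norm_num at h1
  · exact h1 (by rw [Set.mem_uIcc]; norm_num)
end

section
/- Assume a : [0,1] → ℝ is continuous, positive on (0,1], a(0)=0, and there exists α > 0 such that x ↦ x^α/a(x) is non-decreasing in a right neighborhood of 0, with moreover x^K/a(x) non-decreasing on (0,1] where K ≤ 2, and a ∈ C^1(0,1] with b/a ∈ L^1(0,1). Let η, σ be as above and fix β ∈ (0,1). Then for every u ∈ H^1(0,1) with u(0) = 0 (and u/√σ ∈ L^2), one has ∫_0^1 u(x)^2/σ(x) dx ≤ C_HP ∫_0^1 u'(x)^2 dx, where C_HP = (4/a(1) + max_{x∈[β,1]}(1/a(x))·C_P)·max_{x∈[0,1]} η(x) and C_P is the Poincaré constant of (0,1). -/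
open MeasureTheory Set
open scoped ENNReal

lemma my_measurable_rpow_const (c : ℝ) : Measurable fun x : ℝ => x ^ c := by
  have h1 : Measurable fun x : ℝ => Real.exp (Real.log x * c) :=
    Real.measurable_exp.comp (Real.measurable_log.mul measurable_const)
  have h2 : Measurable fun x : ℝ =>
      Real.exp (Real.log x * c) * Real.cos (c * Real.pi) := h1.mul_const _
  have heq : (fun x : ℝ => x ^ c) = fun x =>
      if x = 0 then (0:ℝ) ^ c else
        if x < 0 then Real.exp (Real.log x * c) * Real.cos (c * Real.pi)
        else Real.exp (Real.log x * c) := by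
    funext x
    by_cases hx : x = 0
    · simp [hx]
    rcases lt_or_gt_of_ne hx with h | h
    · simp [hx, h, Real.rpow_def_of_neg h]
    · simp [hx, not_lt.mpr h.le, Real.rpow_def_of_pos h]
  rw [heq]
  exact Measurable.ite (measurableSet_eq) measurable_const
    (Measurable.ite (measurableSet_lt measurable_id measurable_const) h2 h1)

lemma hardy_core (u g : ℝ → ℝ) (β : ℝ) (hβ0 : 0 < β) (hβ1 : β ≤ 1)
    (hg : Measurable g) (hg0 : ∀ t, 0 ≤ g t)
    (hgint : IntegrableOn g (Set.Ioc 0 1))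
    (hbound : ∀ x ∈ Set.Ioc (0:ℝ) β, |u x| ≤ ∫ t in Set.Ioc (0:ℝ) x, g t) :
    ∫⁻ x in Set.Ioc (0:ℝ) β, ENNReal.ofReal (u x ^ 2) * ENNReal.ofReal (x ^ (-2 : ℝ))
      ≤ ENNReal.ofReal 4 * ∫⁻ t in Set.Ioc (0:ℝ) 1, ENNReal.ofReal (g t ^ 2) := by
  set h : ℝ → ℝ≥0∞ := fun t => ENNReal.ofReal (g t ^ 2 * t ^ ((1:ℝ)/2)) with hh
  have hhmeas : Measurable h :=
    ENNReal.measurable_ofReal.comp ((hg.pow_const 2).mul (my_measurable_rpow_const _))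
  -- Step 1 : pointwise Cauchy-Schwarz bound
  have key : ∀ x ∈ Set.Ioc (0:ℝ) β, ENNReal.ofReal (u x ^ 2)
      ≤ ENNReal.ofReal (2 * x ^ ((1:ℝ)/2)) * ∫⁻ t in Set.Ioc (0:ℝ) x, h t := by
    intro x hx
    have hx0 : (0:ℝ) < x := hx.1
    have hgx : IntegrableOn g (Set.Ioc 0 x) :=
      hgint.mono_set (Set.Ioc_subset_Ioc_right (hx.2.trans hβ1))
    have h1 : ENNReal.ofReal |u x| ≤ ∫⁻ t in Set.Ioc (0:ℝ) x, ENNReal.ofReal (g t) := by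
      calc ENNReal.ofReal |u x| ≤ ENNReal.ofReal (∫ t in Set.Ioc (0:ℝ) x, g t) :=
            ENNReal.ofReal_le_ofReal (hbound x hx)
        _ = ∫⁻ t in Set.Ioc (0:ℝ) x, ENNReal.ofReal (g t) :=
            ofReal_integral_eq_lintegral_ofReal hgx (Filter.Eventually.of_forall fun t => hg0 t)
    set f1 : ℝ → ℝ≥0∞ := fun t => ENNReal.ofReal (t ^ (-(1/4) : ℝ)) with hf1
    set f2 : ℝ → ℝ≥0∞ := fun t => ENNReal.ofReal (g t * t ^ ((1/4) : ℝ)) with hf2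
    have hf1m : Measurable f1 := ENNReal.measurable_ofReal.comp (my_measurable_rpow_const _)
    have hf2m : Measurable f2 :=
      ENNReal.measurable_ofReal.comp (hg.mul (my_measurable_rpow_const _))
    have hsplit : (∫⁻ t in Set.Ioc (0:ℝ) x, ENNReal.ofReal (g t))
        = ∫⁻ t in Set.Ioc (0:ℝ) x, (f1 * f2) t := by
      refine setLIntegral_congr_fun measurableSet_Ioc ?_
      intro t ht
      have ht0 : (0:ℝ) < t := ht.1
      simp only [hf1, hf2, Pi.mul_apply]
      rw [← ENNReal.ofReal_mul (Real.rpow_nonneg ht0.le _)]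
      congr 1
      rw [← mul_assoc, mul_comm (t ^ (-(1/4):ℝ)), mul_assoc, ← Real.rpow_add ht0]
      norm_num
    have hCS := ENNReal.lintegral_mul_le_Lp_mul_Lq (volume.restrict (Set.Ioc (0:ℝ) x))
      (Real.holderConjugate_iff.mpr ⟨one_lt_two, by norm_num⟩ : Real.HolderConjugate 2 2) hf1m.aemeasurable hf2m.aemeasurable
    have hA : (∫⁻ t in Set.Ioc (0:ℝ) x, f1 t ^ (2:ℝ)) = ENNReal.ofReal (2 * x ^ ((1:ℝ)/2)) := by
      have e1 : ∀ t ∈ Set.Ioc (0:ℝ) x,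
          f1 t ^ (2:ℝ) = ENNReal.ofReal (t ^ (-(1/2) : ℝ)) := by
        intro t ht
        simp only [hf1]
        rw [ENNReal.ofReal_rpow_of_nonneg (Real.rpow_nonneg ht.1.le _)
          (by norm_num : (0:ℝ) ≤ 2), ← Real.rpow_mul ht.1.le]
        congr 1
        norm_num
      rw [setLIntegral_congr_fun measurableSet_Ioc e1,
        ← ofReal_integral_eq_lintegral_ofReal]
      · congr 1
        rw [← intervalIntegral.integral_of_le hx0.le,
          integral_rpow (Or.inl (by norm_num))]
        rw [Real.zero_rpow (by norm_num)]
        norm_num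
        ring
      · exact (intervalIntegral.intervalIntegrable_rpow' (by norm_num)).1
      · refine (ae_restrict_iff' measurableSet_Ioc).mpr (Filter.Eventually.of_forall ?_)
        exact fun t ht => Real.rpow_nonneg ht.1.le _
    have hB : ∀ t ∈ Set.Ioc (0:ℝ) x, f2 t ^ (2:ℝ) = h t := by
      intro t ht
      simp only [hf2, hh]
      rw [ENNReal.ofReal_rpow_of_nonneg (mul_nonneg (hg0 t) (Real.rpow_nonneg ht.1.le _))
        (by norm_num : (0:ℝ) ≤ 2)]
      congr 1
      rw [Real.mul_rpow (hg0 t) (Real.rpow_nonneg ht.1.le _), ← Real.rpow_mul ht.1.le,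
        show (2:ℝ) = ((2:ℕ):ℝ) from by norm_num, Real.rpow_natCast]
      norm_num
    have hBeq : (∫⁻ t in Set.Ioc (0:ℝ) x, f2 t ^ (2:ℝ)) = ∫⁻ t in Set.Ioc (0:ℝ) x, h t :=
      setLIntegral_congr_fun measurableSet_Ioc hB
    calc ENNReal.ofReal (u x ^ 2) = (ENNReal.ofReal |u x|) ^ 2 := by
          rw [← ENNReal.ofReal_pow (abs_nonneg _), sq_abs]
      _ ≤ (∫⁻ t in Set.Ioc (0:ℝ) x, ENNReal.ofReal (g t)) ^ 2 :=
          pow_le_pow_left₀ (zero_le) h1 2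
      _ = (∫⁻ t in Set.Ioc (0:ℝ) x, (f1 * f2) t) ^ 2 := by rw [hsplit]
      _ ≤ ((∫⁻ t in Set.Ioc (0:ℝ) x, f1 t ^ (2:ℝ)) ^ ((1:ℝ)/2)
            * (∫⁻ t in Set.Ioc (0:ℝ) x, f2 t ^ (2:ℝ)) ^ ((1:ℝ)/2)) ^ 2 :=
          pow_le_pow_left₀ (zero_le) hCS 2
      _ = (∫⁻ t in Set.Ioc (0:ℝ) x, f1 t ^ (2:ℝ))
            * (∫⁻ t in Set.Ioc (0:ℝ) x, f2 t ^ (2:ℝ)) := by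
          rw [mul_pow, ← ENNReal.rpow_natCast (_ ^ ((1:ℝ)/2)) 2,
            ← ENNReal.rpow_natCast ((∫⁻ t in Set.Ioc (0:ℝ) x, f2 t ^ (2:ℝ)) ^ ((1:ℝ)/2)) 2,
            ← ENNReal.rpow_mul, ← ENNReal.rpow_mul]
          norm_num
      _ = ENNReal.ofReal (2 * x ^ ((1:ℝ)/2)) * ∫⁻ t in Set.Ioc (0:ℝ) x, h t := by
          rw [hA, hBeq]
  -- Step 2 : integrate the pointwise bound
  set c : ℝ → ℝ≥0∞ := fun x => ENNReal.ofReal (2 * x ^ (-(3/2) : ℝ)) with hc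
  have hcmeas : Measurable c :=
    ENNReal.measurable_ofReal.comp ((my_measurable_rpow_const _).const_mul 2)
  have step2 : (∫⁻ x in Set.Ioc (0:ℝ) β,
        ENNReal.ofReal (u x ^ 2) * ENNReal.ofReal (x ^ (-2 : ℝ)))
      ≤ ∫⁻ x in Set.Ioc (0:ℝ) β, c x * ∫⁻ t in Set.Ioc (0:ℝ) x, h t := by
    refine lintegral_mono_ae ((ae_restrict_iff' measurableSet_Ioc).mpr
      (Filter.Eventually.of_forall ?_))
    intro x hx
    have hxx : x ^ (-2:ℝ) * (2 * x ^ ((1:ℝ)/2)) = 2 * x ^ (-(3/2):ℝ) := by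
      have h2 : x ^ (-2:ℝ) * x ^ ((1:ℝ)/2) = x ^ (-(3/2):ℝ) := by
        rw [← Real.rpow_add hx.1]; norm_num
      calc x ^ (-2:ℝ) * (2 * x ^ ((1:ℝ)/2)) = 2 * (x ^ (-2:ℝ) * x ^ ((1:ℝ)/2)) := by ring
        _ = 2 * x ^ (-(3/2):ℝ) := by rw [h2]
    calc ENNReal.ofReal (u x ^ 2) * ENNReal.ofReal (x ^ (-2:ℝ))
        ≤ (ENNReal.ofReal (2 * x ^ ((1:ℝ)/2)) * ∫⁻ t in Set.Ioc (0:ℝ) x, h t)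
            * ENNReal.ofReal (x ^ (-2:ℝ)) := mul_le_mul_left (key x hx) _
      _ = c x * ∫⁻ t in Set.Ioc (0:ℝ) x, h t := by
          rw [hc, mul_right_comm,
            ← ENNReal.ofReal_mul (mul_nonneg (by norm_num) (Real.rpow_nonneg hx.1.le _))]
          congr 2
          exact (mul_comm _ _).trans hxx
  -- rewrite the inner integral as an integral over the fixed set Ioc 0 β
  have inner_eq : ∀ x ∈ Set.Ioc (0:ℝ) β, c x * (∫⁻ t in Set.Ioc (0:ℝ) x, h t)
      = ∫⁻ t in Set.Ioc (0:ℝ) β, c x * (if 0 < t ∧ t ≤ x then h t else 0) := by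
    intro x hx
    rw [lintegral_const_mul' _ _ ENNReal.ofReal_ne_top]
    congr 1
    have e : (fun t => if 0 < t ∧ t ≤ x then h t else 0) = (Set.Ioc 0 x).indicator h := by
      funext t; simp [Set.indicator_apply, Set.mem_Ioc]
    rw [e, lintegral_indicator measurableSet_Ioc, Measure.restrict_restrict measurableSet_Ioc,
      Set.inter_eq_self_of_subset_left (Set.Ioc_subset_Ioc_right hx.2)]
  have hswap : (∫⁻ x in Set.Ioc (0:ℝ) β, ∫⁻ t in Set.Ioc (0:ℝ) β,
        c x * (if 0 < t ∧ t ≤ x then h t else 0))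
      = ∫⁻ t in Set.Ioc (0:ℝ) β, ∫⁻ x in Set.Ioc (0:ℝ) β,
          c x * (if 0 < t ∧ t ≤ x then h t else 0) := by
    apply lintegral_lintegral_swap
    apply Measurable.aemeasurable
    refine Measurable.mul (hcmeas.comp measurable_fst) ?_
    exact Measurable.ite
      ((measurableSet_lt measurable_const measurable_snd).inter
        (measurableSet_le measurable_snd measurable_fst))
      (hhmeas.comp measurable_snd) measurable_const
  have inner2 : ∀ t ∈ Set.Ioc (0:ℝ) β, (∫⁻ x in Set.Ioc (0:ℝ) β,
        c x * (if 0 < t ∧ t ≤ x then h t else 0))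
      ≤ ENNReal.ofReal 4 * ENNReal.ofReal (g t ^ 2) := by
    intro t ht
    have e : (fun x => c x * (if 0 < t ∧ t ≤ x then h t else 0))
        = (Set.Ici t).indicator (fun x => c x * h t) := by
      funext x
      by_cases hxt : t ≤ x
      · simp [Set.indicator_apply, hxt, ht.1]
      · simp [Set.indicator_apply, hxt]
    rw [e, lintegral_indicator measurableSet_Ici, Measure.restrict_restrict measurableSet_Ici]
    have hset : Set.Ici t ∩ Set.Ioc (0:ℝ) β = Set.Icc t β := by
      ext y; constructor
      · rintro ⟨h1, _, h3⟩; exact ⟨h1, h3⟩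
      · rintro ⟨h1, h2⟩; exact ⟨h1, lt_of_lt_of_le ht.1 h1, h2⟩
    rw [hset, lintegral_mul_const' _ _ ENNReal.ofReal_ne_top]
    have hcont : ContinuousOn (fun x : ℝ => 2 * x ^ (-(3/2):ℝ)) (Set.Icc t β) := by
      refine continuousOn_const.mul (ContinuousOn.rpow_const continuousOn_id ?_)
      exact fun x hx => Or.inl (ne_of_gt (lt_of_lt_of_le ht.1 hx.1))
    have hcint : IntegrableOn (fun x : ℝ => 2 * x ^ (-(3/2):ℝ)) (Set.Icc t β) :=
      hcont.integrableOn_Icc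
    have hlint : (∫⁻ x in Set.Icc t β, c x)
        = ENNReal.ofReal (∫ x in Set.Icc t β, 2 * x ^ (-(3/2):ℝ)) :=
      (ofReal_integral_eq_lintegral_ofReal hcint
        ((ae_restrict_iff' measurableSet_Icc).mpr (Filter.Eventually.of_forall
          fun x hx => mul_nonneg (by norm_num)
            (Real.rpow_nonneg (le_trans ht.1.le hx.1) _)))).symm
    have hval : (∫ x in Set.Icc t β, 2 * x ^ (-(3/2):ℝ)) ≤ 4 * t ^ (-(1/2):ℝ) := by
      rw [MeasureTheory.integral_Icc_eq_integral_Ioc, ← intervalIntegral.integral_of_le ht.2,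
        intervalIntegral.integral_const_mul, integral_rpow (Or.inr ⟨by norm_num, ?_⟩)]
      · have h1 : (0:ℝ) ≤ β ^ ((-(3/2):ℝ) + 1) :=
          Real.rpow_nonneg (le_trans ht.1.le ht.2) _
        have h2 : -(3/2:ℝ) + 1 = -(1/2:ℝ) := by norm_num
        rw [h2] at h1 ⊢
        have h3 : (0:ℝ) ≤ t ^ (-(1/2):ℝ) := Real.rpow_nonneg ht.1.le _
        rw [div_eq_mul_inv]
        nlinarith [h1, h3]
      · rw [Set.uIcc_of_le ht.2]
        intro hmem
        exact absurd hmem.1 (not_le.mpr ht.1)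
    calc (∫⁻ x in Set.Icc t β, c x) * h t
        ≤ ENNReal.ofReal (4 * t ^ (-(1/2):ℝ)) * h t :=
          mul_le_mul_left (by rw [hlint]; exact ENNReal.ofReal_le_ofReal hval) _
      _ = ENNReal.ofReal 4 * ENNReal.ofReal (g t ^ 2) := by
          rw [hh, ← ENNReal.ofReal_mul
            (mul_nonneg (by norm_num) (Real.rpow_nonneg ht.1.le _)),
            ← ENNReal.ofReal_mul (by norm_num : (0:ℝ) ≤ 4)]
          congr 1
          have h0 : t ^ (-(1/2):ℝ) * t ^ ((1:ℝ)/2) = 1 := by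
            rw [← Real.rpow_add ht.1]; norm_num
          calc 4 * t ^ (-(1/2):ℝ) * (g t ^ 2 * t ^ ((1:ℝ)/2))
              = 4 * g t ^ 2 * (t ^ (-(1/2):ℝ) * t ^ ((1:ℝ)/2)) := by ring
            _ = 4 * g t ^ 2 := by rw [h0, mul_one]
  calc (∫⁻ x in Set.Ioc (0:ℝ) β, ENNReal.ofReal (u x ^ 2) * ENNReal.ofReal (x ^ (-2 : ℝ)))
      ≤ ∫⁻ x in Set.Ioc (0:ℝ) β, c x * ∫⁻ t in Set.Ioc (0:ℝ) x, h t := step2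
    _ = ∫⁻ x in Set.Ioc (0:ℝ) β, ∫⁻ t in Set.Ioc (0:ℝ) β,
          c x * (if 0 < t ∧ t ≤ x then h t else 0) :=
        setLIntegral_congr_fun measurableSet_Ioc inner_eq
    _ = ∫⁻ t in Set.Ioc (0:ℝ) β, ∫⁻ x in Set.Ioc (0:ℝ) β,
          c x * (if 0 < t ∧ t ≤ x then h t else 0) := hswap
    _ ≤ ∫⁻ t in Set.Ioc (0:ℝ) β, ENNReal.ofReal 4 * ENNReal.ofReal (g t ^ 2) :=
        lintegral_mono_ae ((ae_restrict_iff' measurableSet_Ioc).mpr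
          (Filter.Eventually.of_forall inner2))
    _ = ENNReal.ofReal 4 * ∫⁻ t in Set.Ioc (0:ℝ) β, ENNReal.ofReal (g t ^ 2) :=
        lintegral_const_mul' _ _ ENNReal.ofReal_ne_top
    _ ≤ ENNReal.ofReal 4 * ∫⁻ t in Set.Ioc (0:ℝ) 1, ENNReal.ofReal (g t ^ 2) :=
        mul_le_mul_right (lintegral_mono_set (Set.Ioc_subset_Ioc_right hβ1)) _

/-- Hardy–Poincaré inequality: ∫ u²/σ ≤ C_HP ∫ u'² with
C_HP = (4/a(1) + max_{[β,1]}(1/a)·C_P)·max_{[0,1]} η. -/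
theorem hardy_poincare (a b η σ u u' : ℝ → ℝ) (K C_P β : ℝ)
    (ha : ContinuousOn a (Set.Icc 0 1)) (hb : ContinuousOn b (Set.Icc 0 1))
    (ha0 : a 0 = 0) (hapos : ∀ x ∈ Set.Ioc (0:ℝ) 1, 0 < a x)
    (ha_diff : ∀ x ∈ Set.Ioc (0:ℝ) 1, HasDerivAt a (deriv a x) x)
    (hba : MeasureTheory.IntegrableOn (fun s => b s / a s) (Set.Ioc 0 1))
    (hη : ∀ x, η x = Real.exp (∫ s in (1/2:ℝ)..x, b s / a s))
    (hσ : ∀ x, σ x = a x / η x)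
    (hα : ∃ α > (0:ℝ), ∃ δ > (0:ℝ), MonotoneOn (fun x => x ^ α / a x) (Set.Ioc 0 δ))
    (hK2 : K ≤ 2) (hKmono : MonotoneOn (fun x => x ^ K / a x) (Set.Ioc 0 1))
    (hβ : β ∈ Set.Ioo (0:ℝ) 1)
    (hCP : ∀ v v' : ℝ → ℝ,
      (∀ x ∈ Set.Icc (0:ℝ) 1, HasDerivWithinAt v (v' x) (Set.Icc 0 1) x) →
      v 0 = 0 →
      IntervalIntegrable (fun x => (v' x) ^ 2) MeasureTheory.volume 0 1 →
      (∫ x in (0:ℝ)..1, (v x) ^ 2) ≤ C_P * ∫ x in (0:ℝ)..1, (v' x) ^ 2)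
    (hu : ∀ x ∈ Set.Icc (0:ℝ) 1, HasDerivWithinAt u (u' x) (Set.Icc 0 1) x)
    (hu0 : u 0 = 0)
    (hu'int : IntervalIntegrable (fun x => (u' x) ^ 2) MeasureTheory.volume 0 1)
    (huσ : MeasureTheory.IntegrableOn (fun x => (u x) ^ 2 / σ x) (Set.Ioc 0 1)) :
    ∫ x in (0:ℝ)..1, (u x) ^ 2 / σ x
      ≤ ((4 / a 1 + sSup ((fun x => 1 / a x) '' Set.Icc β 1) * C_P) *
          sSup (η '' Set.Icc 0 1)) * ∫ x in (0:ℝ)..1, (u' x) ^ 2 := by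
  obtain ⟨hβ0, hβ1⟩ := hβ
  have ha1 : 0 < a 1 := hapos 1 ⟨one_pos, le_refl 1⟩
  set M := sSup (η '' Set.Icc 0 1) with hM
  set S := sSup ((fun x => 1 / a x) '' Set.Icc β 1) with hS
  set Y := ∫ x in (0:ℝ)..1, (u' x) ^ 2 with hY
  have hY0 : 0 ≤ Y := intervalIntegral.integral_nonneg zero_le_one (fun x _ => sq_nonneg _)
  -- continuity of η and bounds
  have hbaInt : IntervalIntegrable (fun s => b s / a s) volume 0 1 := by
    rw [intervalIntegrable_iff_integrableOn_Ioc_of_le zero_le_one]; exact hba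
  have hprim : ContinuousOn (fun x => ∫ s in (1/2:ℝ)..x, b s / a s) (Set.Icc 0 1) := by
    have h12 : (1/2:ℝ) ∈ Set.uIcc (0:ℝ) 1 := by
      rw [Set.uIcc_of_le zero_le_one]; constructor <;> norm_num
    have := intervalIntegral.continuousOn_primitive_interval' hbaInt h12
    rwa [Set.uIcc_of_le zero_le_one] at this
  have hηc : ContinuousOn η (Set.Icc 0 1) :=
    (Real.continuous_exp.comp_continuousOn hprim).congr (fun x _ => hη x)
  have hηpos : ∀ x, 0 < η x := fun x => by rw [hη x]; exact Real.exp_pos _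
  have hMbdd : BddAbove (η '' Set.Icc 0 1) :=
    (isCompact_Icc.image_of_continuousOn hηc).bddAbove
  have hηleM : ∀ x ∈ Set.Icc (0:ℝ) 1, η x ≤ M := fun x hx => le_csSup hMbdd ⟨x, hx, rfl⟩
  have hM0 : 0 < M := lt_of_lt_of_le (hηpos 1) (hηleM 1 ⟨zero_le_one, le_refl 1⟩)
  have hinvηc : ContinuousOn (fun x => 1 / η x) (Set.Icc 0 1) :=
    continuousOn_const.div hηc (fun x _ => (hηpos x).ne')
  set N := sSup ((fun x => 1 / η x) '' Set.Icc 0 1) with hN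
  have hNbdd : BddAbove ((fun x => 1 / η x) '' Set.Icc 0 1) :=
    (isCompact_Icc.image_of_continuousOn hinvηc).bddAbove
  have hinvηleN : ∀ x ∈ Set.Icc (0:ℝ) 1, 1 / η x ≤ N := fun x hx => le_csSup hNbdd ⟨x, hx, rfl⟩
  -- bounds for 1/a on [β,1]
  have haβc : ContinuousOn (fun x => 1 / a x) (Set.Icc β 1) :=
    continuousOn_const.div (ha.mono (Set.Icc_subset_Icc hβ0.le (le_refl 1)))
      (fun x hx => (hapos x ⟨lt_of_lt_of_le hβ0 hx.1, hx.2⟩).ne')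
  have hSbdd : BddAbove ((fun x => 1 / a x) '' Set.Icc β 1) :=
    (isCompact_Icc.image_of_continuousOn haβc).bddAbove
  have hinvaleS : ∀ x ∈ Set.Icc β 1, 1 / a x ≤ S := fun x hx => le_csSup hSbdd ⟨x, hx, rfl⟩
  have hS0 : 0 ≤ S := le_trans (by positivity) (hinvaleS 1 ⟨hβ1.le, le_refl 1⟩)
  -- u and its derivative
  have hucont : ContinuousOn u (Set.Icc 0 1) := fun x hx => (hu x hx).continuousWithinAt
  set d := deriv u with hd
  have hdmeas : Measurable d := measurable_deriv u
  have hae : u' =ᵐ[volume.restrict (Set.Ioc (0:ℝ) 1)] d := by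
    have h1 : ∀ᵐ x ∂(volume.restrict (Set.Ioc (0:ℝ) 1)), x ≠ 1 := by
      refine ae_restrict_of_ae ?_
      have hs : {x : ℝ | ¬ x ≠ 1} = {1} := by ext y; simp
      rw [ae_iff, hs]
      exact measure_singleton 1
    have h2 : ∀ᵐ x ∂(volume.restrict (Set.Ioc (0:ℝ) 1)), x ∈ Set.Ioc (0:ℝ) 1 :=
      ae_restrict_mem measurableSet_Ioc
    filter_upwards [h1, h2] with x hx1 hx2
    have hxo : x ∈ Set.Ioo (0:ℝ) 1 := ⟨hx2.1, lt_of_le_of_ne hx2.2 hx1⟩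
    exact (((hu x (Set.Ioo_subset_Icc_self hxo)).hasDerivAt
      (Icc_mem_nhds hxo.1 hxo.2)).deriv).symm
  have hu'sq : IntegrableOn (fun x => (u' x) ^ 2) (Set.Ioc 0 1) := hu'int.1
  have hu'L1 : IntegrableOn u' (Set.Ioc 0 1) := by
    refine Integrable.mono' ((hu'sq.add (integrable_const 1)).div_const 2)
      (hdmeas.aestronglyMeasurable.congr hae.symm) ?_
    refine Filter.Eventually.of_forall ?_
    intro x
    simp only [Pi.add_apply]
    rw [Real.norm_eq_abs]
    nlinarith [sq_nonneg (|u' x| - 1), sq_abs (u' x), abs_nonneg (u' x)]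
  have hdL1 : IntegrableOn d (Set.Ioc 0 1) := hu'L1.congr hae
  have hae2 : (fun x => u' x ^ 2) =ᵐ[volume.restrict (Set.Ioc (0:ℝ) 1)]
      (fun x => d x ^ 2) := hae.mono fun x h => by simp [h]
  have hdsq : IntegrableOn (fun x => (d x) ^ 2) (Set.Ioc 0 1) := hu'sq.congr hae2
  have hYd : (∫ x in Set.Ioc (0:ℝ) 1, (d x) ^ 2) = Y := by
    rw [hY, intervalIntegral.integral_of_le zero_le_one]
    exact integral_congr_ae hae2.symm
  -- FTC
  have hftc : ∀ x ∈ Set.Ioc (0:ℝ) 1, u x = ∫ t in (0:ℝ)..x, u' t := by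
    intro x hx
    have hint : IntervalIntegrable u' volume 0 x := by
      rw [intervalIntegrable_iff_integrableOn_Ioc_of_le hx.1.le]
      exact hu'L1.mono_set (Set.Ioc_subset_Ioc_right hx.2)
    have := intervalIntegral.integral_eq_sub_of_hasDeriv_right_of_le hx.1.le
      (hucont.mono (Set.Icc_subset_Icc (le_refl 0) hx.2))
      (fun y hy => ((hu y ⟨hy.1.le, le_trans hy.2.le hx.2⟩).hasDerivAt
        (Icc_mem_nhds hy.1 (lt_of_lt_of_le hy.2 hx.2))).hasDerivWithinAt)
      hint
    rw [hu0, sub_zero] at this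
    exact this.symm
  -- Hardy input bound
  have hbound : ∀ x ∈ Set.Ioc (0:ℝ) β, |u x| ≤ ∫ t in Set.Ioc (0:ℝ) x, |d t| := by
    intro x hx
    have hx1 : x ≤ 1 := le_trans hx.2 hβ1.le
    rw [hftc x ⟨hx.1, hx1⟩]
    calc |∫ t in (0:ℝ)..x, u' t| ≤ ∫ t in (0:ℝ)..x, |u' t| :=
          intervalIntegral.abs_integral_le_integral_abs hx.1.le
      _ = ∫ t in Set.Ioc (0:ℝ) x, |u' t| := intervalIntegral.integral_of_le hx.1.le
      _ = ∫ t in Set.Ioc (0:ℝ) x, |d t| := by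
          refine integral_congr_ae ?_
          have h5 := ae_restrict_of_ae_restrict_of_subset
            (Set.Ioc_subset_Ioc_right hx1) hae
          exact h5.mono fun t h => by simp [h]
  have hcore := hardy_core u (fun t => |d t|) β hβ0 hβ1.le
    (continuous_abs.measurable.comp hdmeas) (fun t => abs_nonneg _) hdL1.abs hbound
  -- pointwise weight bound near 0
  have ha_inv : ∀ x ∈ Set.Ioc (0:ℝ) β, 1 / a x ≤ (1 / a 1) * x ^ (-(2:ℝ)) := by
    intro x hx
    have hx0 := hx.1
    have hx1 : x ≤ 1 := le_trans hx.2 hβ1.le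
    have hax : 0 < a x := hapos x ⟨hx0, hx1⟩
    have hmono := hKmono ⟨hx0, hx1⟩ ⟨one_pos, le_refl 1⟩ hx1
    simp only [Real.one_rpow] at hmono
    have hxK : x ^ K * x ^ (-K) = 1 := by
      rw [← Real.rpow_add hx0]; simp
    have h2 : (1:ℝ) / a x = (x ^ K / a x) * x ^ (-K) := by
      calc (1:ℝ) / a x = (x ^ K * x ^ (-K)) / a x := by rw [hxK]
        _ = (x ^ K / a x) * x ^ (-K) := by ring
    rw [h2]
    have hxneg : 0 ≤ x ^ (-K) := Real.rpow_nonneg hx0.le _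
    calc (x ^ K / a x) * x ^ (-K) ≤ (1 / a 1) * x ^ (-K) :=
          mul_le_mul_of_nonneg_right hmono hxneg
      _ ≤ (1 / a 1) * x ^ (-(2:ℝ)) :=
          mul_le_mul_of_nonneg_left
            (Real.rpow_le_rpow_of_exponent_ge hx0 hx1 (by linarith)) (by positivity)
  -- integrability of u²/a on (0,1]
  have hu2ameas : AEStronglyMeasurable (fun x => u x ^ 2 / a x)
      (volume.restrict (Set.Ioc (0:ℝ) 1)) := by
    have hcont : ContinuousOn (fun x => u x ^ 2 / a x) (Set.Ioc 0 1) :=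
      ((hucont.mono Set.Ioc_subset_Icc_self).pow 2).div
        (ha.mono Set.Ioc_subset_Icc_self) (fun x hx => (hapos x hx).ne')
    exact hcont.aestronglyMeasurable measurableSet_Ioc
  have hu2aInt : IntegrableOn (fun x => u x ^ 2 / a x) (Set.Ioc 0 1) := by
    refine Integrable.mono' (huσ.const_mul N) hu2ameas ?_
    refine (ae_restrict_iff' measurableSet_Ioc).mpr (Filter.Eventually.of_forall ?_)
    intro x hx
    have hax := hapos x hx
    have hηx := hηpos x
    have hσx : 0 < σ x := by rw [hσ x]; positivity
    rw [Real.norm_eq_abs, abs_of_nonneg (by positivity)]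
    have key : u x ^ 2 / a x = (u x ^ 2 / σ x) * (1 / η x) := by
      rw [hσ x]; field_simp
    rw [key]
    calc (u x ^ 2 / σ x) * (1 / η x) ≤ (u x ^ 2 / σ x) * N :=
          mul_le_mul_of_nonneg_left (hinvηleN x (Set.Ioc_subset_Icc_self hx)) (by positivity)
      _ = N * (u x ^ 2 / σ x) := mul_comm _ _
  -- split the integral
  have hsplit : (∫ x in Set.Ioc (0:ℝ) 1, u x ^ 2 / a x)
      = (∫ x in Set.Ioc (0:ℝ) β, u x ^ 2 / a x) + ∫ x in Set.Ioc β 1, u x ^ 2 / a x := by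
    have hun : Set.Ioc (0:ℝ) 1 = Set.Ioc 0 β ∪ Set.Ioc β 1 :=
      (Set.Ioc_union_Ioc_eq_Ioc hβ0.le hβ1.le).symm
    rw [hun]
    exact setIntegral_union (Set.Ioc_disjoint_Ioc_of_le le_rfl) measurableSet_Ioc
      (hu2aInt.mono_set (Set.Ioc_subset_Ioc_right hβ1.le))
      (hu2aInt.mono_set (Set.Ioc_subset_Ioc_left hβ0.le))
  -- Piece 1
  have hP1 : (∫ x in Set.Ioc (0:ℝ) β, u x ^ 2 / a x) ≤ 4 / a 1 * Y := by
    have hint1 : IntegrableOn (fun x => u x ^ 2 / a x) (Set.Ioc 0 β) :=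
      hu2aInt.mono_set (Set.Ioc_subset_Ioc_right hβ1.le)
    have hnn : 0 ≤ᵐ[volume.restrict (Set.Ioc (0:ℝ) β)] fun x => u x ^ 2 / a x :=
      (ae_restrict_iff' measurableSet_Ioc).mpr (Filter.Eventually.of_forall fun x hx =>
        div_nonneg (sq_nonneg _) (hapos x ⟨hx.1, le_trans hx.2 hβ1.le⟩).le)
    rw [integral_eq_lintegral_of_nonneg_ae hnn hint1.1]
    have hdint : (∫⁻ t in Set.Ioc (0:ℝ) 1, ENNReal.ofReal (|d t| ^ 2))
        = ENNReal.ofReal Y := by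
      rw [← hYd, ← ofReal_integral_eq_lintegral_ofReal]
      · congr 1
        exact integral_congr_ae (Filter.Eventually.of_forall fun t => by simp [sq_abs])
      · exact hdsq.congr (Filter.Eventually.of_forall fun t => by simp [sq_abs])
      · exact Filter.Eventually.of_forall fun t => sq_nonneg _
    have hchain : (∫⁻ x in Set.Ioc (0:ℝ) β, ENNReal.ofReal (u x ^ 2 / a x))
        ≤ ENNReal.ofReal (1 / a 1) * (ENNReal.ofReal 4 * ENNReal.ofReal Y) := by
      calc (∫⁻ x in Set.Ioc (0:ℝ) β, ENNReal.ofReal (u x ^ 2 / a x))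
          ≤ ∫⁻ x in Set.Ioc (0:ℝ) β, ENNReal.ofReal (1 / a 1)
              * (ENNReal.ofReal (u x ^ 2) * ENNReal.ofReal (x ^ (-2:ℝ))) := by
            refine lintegral_mono_ae ((ae_restrict_iff' measurableSet_Ioc).mpr
              (Filter.Eventually.of_forall ?_))
            intro x hx
            have hax : 0 < a x := hapos x ⟨hx.1, le_trans hx.2 hβ1.le⟩
            have hstep : u x ^ 2 / a x ≤ (1 / a 1) * (u x ^ 2 * x ^ (-(2:ℝ))) := by
              have e : u x ^ 2 / a x = u x ^ 2 * (1 / a x) := by ring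
              rw [e]
              calc u x ^ 2 * (1 / a x) ≤ u x ^ 2 * ((1 / a 1) * x ^ (-(2:ℝ))) :=
                    mul_le_mul_of_nonneg_left (ha_inv x hx) (sq_nonneg _)
                _ = (1 / a 1) * (u x ^ 2 * x ^ (-(2:ℝ))) := by ring
            calc ENNReal.ofReal (u x ^ 2 / a x)
                ≤ ENNReal.ofReal ((1 / a 1) * (u x ^ 2 * x ^ (-(2:ℝ)))) :=
                  ENNReal.ofReal_le_ofReal hstep
              _ = ENNReal.ofReal (1 / a 1)
                  * (ENNReal.ofReal (u x ^ 2) * ENNReal.ofReal (x ^ (-2:ℝ))) := by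
                  rw [ENNReal.ofReal_mul (by positivity),
                    ENNReal.ofReal_mul (sq_nonneg _)]
        _ = ENNReal.ofReal (1 / a 1) * ∫⁻ x in Set.Ioc (0:ℝ) β,
              ENNReal.ofReal (u x ^ 2) * ENNReal.ofReal (x ^ (-2:ℝ)) :=
            lintegral_const_mul' _ _ ENNReal.ofReal_ne_top
        _ ≤ ENNReal.ofReal (1 / a 1)
              * (ENNReal.ofReal 4 * ∫⁻ t in Set.Ioc (0:ℝ) 1, ENNReal.ofReal (|d t| ^ 2)) :=
            mul_le_mul_right hcore _
        _ = ENNReal.ofReal (1 / a 1) * (ENNReal.ofReal 4 * ENNReal.ofReal Y) := by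
            rw [hdint]
    calc (∫⁻ x in Set.Ioc (0:ℝ) β, ENNReal.ofReal (u x ^ 2 / a x)).toReal
        ≤ (ENNReal.ofReal (1 / a 1) * (ENNReal.ofReal 4 * ENNReal.ofReal Y)).toReal :=
          ENNReal.toReal_mono
            (ENNReal.mul_ne_top ENNReal.ofReal_ne_top
              (ENNReal.mul_ne_top ENNReal.ofReal_ne_top ENNReal.ofReal_ne_top)) hchain
      _ = (1 / a 1) * (4 * Y) := by
          rw [ENNReal.toReal_mul, ENNReal.toReal_mul,
            ENNReal.toReal_ofReal (by positivity), ENNReal.toReal_ofReal (by norm_num),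
            ENNReal.toReal_ofReal hY0]
      _ = 4 / a 1 * Y := by ring
  -- Piece 2
  have hu2Int : IntegrableOn (fun x => u x ^ 2) (Set.Ioc 0 1) :=
    ((hucont.pow 2).integrableOn_Icc).mono_set Set.Ioc_subset_Icc_self
  have hP2 : (∫ x in Set.Ioc β 1, u x ^ 2 / a x) ≤ S * (C_P * Y) := by
    have h1 : (∫ x in Set.Ioc β 1, u x ^ 2 / a x) ≤ ∫ x in Set.Ioc β 1, S * u x ^ 2 := by
      refine setIntegral_mono_on (hu2aInt.mono_set (Set.Ioc_subset_Ioc_left hβ0.le))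
        ((hu2Int.mono_set (Set.Ioc_subset_Ioc_left hβ0.le)).const_mul S)
        measurableSet_Ioc ?_
      intro x hx
      have hax : 0 < a x := hapos x (Set.Ioc_subset_Ioc_left hβ0.le hx)
      calc u x ^ 2 / a x = u x ^ 2 * (1 / a x) := by ring
        _ ≤ u x ^ 2 * S :=
            mul_le_mul_of_nonneg_left (hinvaleS x (Set.Ioc_subset_Icc_self hx)) (sq_nonneg _)
        _ = S * u x ^ 2 := mul_comm _ _
    have h2 : (∫ x in Set.Ioc β 1, S * u x ^ 2) = S * ∫ x in Set.Ioc β 1, u x ^ 2 :=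
      integral_const_mul S _
    have h3 : (∫ x in Set.Ioc β 1, u x ^ 2) ≤ ∫ x in Set.Ioc (0:ℝ) 1, u x ^ 2 := by
      refine setIntegral_mono_set hu2Int ?_ ?_
      · exact (ae_restrict_iff' measurableSet_Ioc).mpr
          (Filter.Eventually.of_forall fun x _ => sq_nonneg _)
      · exact Filter.Eventually.of_forall (Set.Ioc_subset_Ioc_left hβ0.le)
    have h4 : (∫ x in Set.Ioc (0:ℝ) 1, u x ^ 2) ≤ C_P * Y := by
      have := hCP u u' hu hu0 hu'int
      rwa [intervalIntegral.integral_of_le zero_le_one] at this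
    calc (∫ x in Set.Ioc β 1, u x ^ 2 / a x) ≤ S * ∫ x in Set.Ioc β 1, u x ^ 2 :=
          h1.trans_eq h2
      _ ≤ S * (C_P * Y) := mul_le_mul_of_nonneg_left (h3.trans h4) hS0
  -- first step: pass from σ to a
  have hstep1 : (∫ x in Set.Ioc (0:ℝ) 1, u x ^ 2 / σ x)
      ≤ M * ∫ x in Set.Ioc (0:ℝ) 1, u x ^ 2 / a x := by
    have h1 : (∫ x in Set.Ioc (0:ℝ) 1, u x ^ 2 / σ x)
        ≤ ∫ x in Set.Ioc (0:ℝ) 1, M * (u x ^ 2 / a x) := by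
      refine setIntegral_mono_on huσ (hu2aInt.const_mul M) measurableSet_Ioc ?_
      intro x hx
      have hax := hapos x hx
      have hηx := hηpos x
      rw [hσ x, div_div_eq_mul_div]
      calc u x ^ 2 * η x / a x = η x * (u x ^ 2 / a x) := by ring
        _ ≤ M * (u x ^ 2 / a x) :=
          mul_le_mul_of_nonneg_right (hηleM x (Set.Ioc_subset_Icc_self hx)) (by positivity)
    rwa [integral_const_mul] at h1
  -- assemble everything
  rw [intervalIntegral.integral_of_le zero_le_one]
  calc (∫ x in Set.Ioc (0:ℝ) 1, u x ^ 2 / σ x)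
      ≤ M * ∫ x in Set.Ioc (0:ℝ) 1, u x ^ 2 / a x := hstep1
    _ = M * ((∫ x in Set.Ioc (0:ℝ) β, u x ^ 2 / a x)
          + ∫ x in Set.Ioc β 1, u x ^ 2 / a x) := by rw [hsplit]
    _ ≤ M * (4 / a 1 * Y + S * (C_P * Y)) :=
        mul_le_mul_of_nonneg_left (add_le_add hP1 hP2) hM0.le
    _ = ((4 / a 1 + S * C_P) * M) * Y := by ring
end

section
/- Let a,b,η,σ be as in the degenerate setting (a continuous, positive on (0,1], a(0)=0, b/a ∈ L^1, η the Feller weight, σ = a/η), and suppose K := sup x|a'|/a ≤ 1 and x^K/a is non-decreasing on (0,1]. If u ∈ H^2_{1/σ}(0,1) (i.e. u ∈ H^1_{1/σ} and σ(ηu')' ∈ L^2_{1/σ}), then lim_{x→0^+} x |u'(x)|^2 = 0. -/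
open MeasureTheory Set Filter intervalIntegral

/-- If K ≤ 1 and u ∈ H²_{1/σ}(0,1), then x|u'(x)|² → 0 as x → 0⁺. -/
theorem boundary_limit_xu'sq (a b η σ u u' u'' : ℝ → ℝ) (K : ℝ)
    (ha : ContinuousOn a (Set.Icc 0 1)) (hb : ContinuousOn b (Set.Icc 0 1))
    (ha0 : a 0 = 0) (hapos : ∀ x ∈ Set.Ioc (0:ℝ) 1, 0 < a x)
    (ha_diff : ∀ x ∈ Set.Ioc (0:ℝ) 1, HasDerivAt a (deriv a x) x)
    (hba : MeasureTheory.IntegrableOn (fun s => b s / a s) (Set.Ioc 0 1))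
    (hη : ∀ x, η x = Real.exp (∫ s in (1/2:ℝ)..x, b s / a s))
    (hσ : ∀ x, σ x = a x / η x)
    (hKdef : ∀ x ∈ Set.Ioc (0:ℝ) 1, x * |deriv a x| / a x ≤ K)
    (hK1 : K ≤ 1)
    (hKmono : MonotoneOn (fun x => x ^ K / a x) (Set.Ioc 0 1))
    (hu : ∀ x ∈ Set.Ioo (0:ℝ) 1, HasDerivAt u (u' x) x)
    (hu' : ∀ x ∈ Set.Ioo (0:ℝ) 1, HasDerivAt u' (u'' x) x)
    (huL2 : MeasureTheory.IntegrableOn (fun x => (u x) ^ 2 / σ x) (Set.Ioc 0 1))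
    (hu'L2 : MeasureTheory.IntegrableOn (fun x => (u' x) ^ 2) (Set.Ioc 0 1))
    (hBu : MeasureTheory.IntegrableOn
        (fun x => (a x * u'' x + b x * u' x) ^ 2 / σ x) (Set.Ioc 0 1)) :
    Filter.Tendsto (fun x => x * (u' x) ^ 2)
      (nhdsWithin 0 (Set.Ioi 0)) (nhds 0) := by
  have a1pos : 0 < a 1 := hapos 1 ⟨one_pos, le_rfl⟩
  set c : ℝ := (a 1)⁻¹ with hc
  have hc0 : 0 < c := inv_pos.2 a1pos
  set M : ℝ := ∫ s in Set.Ioc (0:ℝ) 1, |b s / a s| with hM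
  -- lower bound for η on [0,1]
  have hηlb : ∀ x ∈ Set.Icc (0:ℝ) 1, Real.exp (-M) ≤ η x := by
    intro x hx
    rw [hη x]
    apply Real.exp_le_exp.2
    have h1 : |∫ s in (1/2:ℝ)..x, b s / a s| ≤ ∫ s in Set.uIoc (1/2:ℝ) x, |b s / a s| := by
      have := intervalIntegral.norm_integral_le_integral_norm_uIoc
          (f := fun s => b s / a s) (a := (1/2:ℝ)) (b := x) (μ := volume)
      simp only [Real.norm_eq_abs] at this
      exact this
    have h2 : ∫ s in Set.uIoc (1/2:ℝ) x, |b s / a s| ≤ M := by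
      apply setIntegral_mono_set hba.abs
      · exact Filter.Eventually.of_forall fun s => abs_nonneg _
      · apply HasSubset.Subset.eventuallyLE
        apply Set.Ioc_subset_Ioc
        · exact le_min (by norm_num) hx.1
        · exact max_le (by norm_num) hx.2
    have := (abs_le.1 h1).1
    linarith
  have hηpos : ∀ x, 0 < η x := fun x => by rw [hη x]; exact Real.exp_pos _
  have hσpos : ∀ x ∈ Set.Ioc (0:ℝ) 1, 0 < σ x := fun x hx => by
    rw [hσ x]; exact div_pos (hapos x hx) (hηpos x)
  -- bounds on a and b
  obtain ⟨A, hA⟩ := isCompact_Icc.exists_bound_of_continuousOn ha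
  obtain ⟨B, hB⟩ := isCompact_Icc.exists_bound_of_continuousOn hb
  have hB0 : 0 ≤ B := le_trans (norm_nonneg _) (hB 0 ⟨le_rfl, zero_le_one⟩)
  -- σ is bounded above on (0,1]
  have hσub : ∀ x ∈ Set.Ioc (0:ℝ) 1, σ x ≤ A * Real.exp M := by
    intro x hx
    rw [hσ x]
    calc a x / η x ≤ a x / Real.exp (-M) :=
          div_le_div_of_nonneg_left (hapos x hx).le (Real.exp_pos _)
            (hηlb x ⟨hx.1.le, hx.2⟩)
      _ = a x * Real.exp M := by rw [Real.exp_neg, div_eq_mul_inv, inv_inv]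
      _ ≤ A * Real.exp M := by
          apply mul_le_mul_of_nonneg_right _ (Real.exp_pos M).le
          calc a x ≤ |a x| := le_abs_self _
            _ = ‖a x‖ := (Real.norm_eq_abs _).symm
            _ ≤ A := hA x ⟨hx.1.le, hx.2⟩
  -- x ≤ c * a x on (0,1]
  have hxa : ∀ x ∈ Set.Ioc (0:ℝ) 1, x ≤ c * a x := by
    intro x hx
    have hax := hapos x hx
    have hmono := hKmono hx ⟨one_pos, le_rfl⟩ hx.2
    simp only [Real.one_rpow] at hmono
    have hx1 : x ^ (1:ℝ) ≤ x ^ K := Real.rpow_le_rpow_of_exponent_ge hx.1 hx.2 hK1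
    rw [Real.rpow_one] at hx1
    have hd : x / a x ≤ 1 / a 1 := le_trans ((div_le_div_iff_of_pos_right hax).2 hx1) hmono
    have := (div_le_div_iff₀ hax a1pos).1 hd
    rw [hc, inv_mul_eq_div, le_div_iff₀ a1pos]
    linarith
  -- abbreviations
  set f : ℝ → ℝ := fun x => a x * u'' x + b x * u' x with hfd
  set g : ℝ → ℝ := fun x => u' x ^ 2 + 2 * x * u' x * u'' x with hgd
  set F : ℝ → ℝ := fun x => x * u' x ^ 2 with hFd
  -- measurability on (0,1)
  have hmu' : AEStronglyMeasurable u' (volume.restrict (Set.Ioo 0 1)) := by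
    apply (measurable_deriv u).aestronglyMeasurable.congr
    rw [Filter.EventuallyEq, ae_restrict_iff' measurableSet_Ioo]
    exact Filter.Eventually.of_forall fun x hx => (hu x hx).deriv
  have hmu'' : AEStronglyMeasurable u'' (volume.restrict (Set.Ioo 0 1)) := by
    apply (measurable_deriv u').aestronglyMeasurable.congr
    rw [Filter.EventuallyEq, ae_restrict_iff' measurableSet_Ioo]
    exact Filter.Eventually.of_forall fun x hx => (hu' x hx).deriv
  have hma : AEStronglyMeasurable a (volume.restrict (Set.Ioo 0 1)) :=
    (ha.mono Set.Ioo_subset_Icc_self).aestronglyMeasurable measurableSet_Ioo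
  have hmb : AEStronglyMeasurable b (volume.restrict (Set.Ioo 0 1)) :=
    (hb.mono Set.Ioo_subset_Icc_self).aestronglyMeasurable measurableSet_Ioo
  have hmf : AEStronglyMeasurable f (volume.restrict (Set.Ioo 0 1)) :=
    (hma.mul hmu'').add (hmb.mul hmu')
  -- integrability of (u')² and f² on (0,1)
  have hu'2 : IntegrableOn (fun x => u' x ^ 2) (Set.Ioo 0 1) :=
    hu'L2.mono_set Set.Ioo_subset_Ioc_self
  have hf2 : IntegrableOn (fun x => f x ^ 2) (Set.Ioo 0 1) := by
    apply Integrable.mono'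
      ((hBu.mono_set Set.Ioo_subset_Ioc_self).const_mul (A * Real.exp M))
    · exact (hmf.pow 2).congr (Filter.Eventually.of_forall fun x => by simp)
    · rw [ae_restrict_iff' measurableSet_Ioo]
      refine Filter.Eventually.of_forall fun x hx => ?_
      have hx' : x ∈ Set.Ioc (0:ℝ) 1 := ⟨hx.1, hx.2.le⟩
      have hσx := hσpos x hx'
      have hkey : f x ^ 2 = f x ^ 2 / σ x * σ x := (div_mul_cancel₀ _ hσx.ne').symm
      rw [Real.norm_eq_abs, abs_of_nonneg (sq_nonneg _)]
      calc f x ^ 2 = f x ^ 2 / σ x * σ x := hkey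
        _ ≤ f x ^ 2 / σ x * (A * Real.exp M) :=
            mul_le_mul_of_nonneg_left (hσub x hx')
              (div_nonneg (sq_nonneg _) hσx.le)
        _ = A * Real.exp M * (f x ^ 2 / σ x) := mul_comm _ _
  -- integrability of g on (0,1)
  have hgint : IntegrableOn g (Set.Ioo 0 1) := by
    have hD : Integrable (fun x => (1 + c + 2*c*B) * u' x ^ 2 + c * f x ^ 2)
        (volume.restrict (Set.Ioo 0 1)) := (hu'2.const_mul _).add (hf2.const_mul _)
    apply Integrable.mono' hD
    · apply AEStronglyMeasurable.add
      · exact (hmu'.pow 2).congr (Filter.Eventually.of_forall fun x => by simp)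
      · exact ((aestronglyMeasurable_const.mul aestronglyMeasurable_id).mul hmu').mul hmu''
    · rw [ae_restrict_iff' measurableSet_Ioo]
      refine Filter.Eventually.of_forall fun x hx => ?_
      have hx' : x ∈ Set.Ioc (0:ℝ) 1 := ⟨hx.1, hx.2.le⟩
      have hax := hapos x hx'
      have hxc := hxa x hx'
      have hBx : |b x| ≤ B := by
        have := hB x ⟨hx.1.le, hx.2.le⟩; rwa [Real.norm_eq_abs] at this
      have hP : (0:ℝ) ≤ |u' x| := abs_nonneg _
      have hQ : (0:ℝ) ≤ |u'' x| := abs_nonneg _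
      have hFa : (0:ℝ) ≤ |f x| := abs_nonneg _
      have fact1 : a x * |u'' x| ≤ |f x| + B * |u' x| := by
        have h1 : a x * |u'' x| = |a x * u'' x| := by rw [abs_mul, abs_of_pos hax]
        have h2 : a x * u'' x = f x - b x * u' x := by rw [hfd]; ring
        rw [h1, h2]
        calc |f x - b x * u' x| ≤ |f x| + |b x * u' x| := abs_sub _ _
          _ = |f x| + |b x| * |u' x| := by rw [abs_mul]
          _ ≤ |f x| + B * |u' x| := by nlinarith
      have fact2 : 2 * (|u' x| * |f x|) ≤ |u' x|^2 + |f x|^2 := by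
        nlinarith [sq_nonneg (|u' x| - |f x|)]
      have hP2 : |u' x|^2 = u' x ^ 2 := sq_abs _
      have hFa2 : |f x|^2 = f x ^ 2 := sq_abs _
      have h0 : |g x| ≤ u' x ^ 2 + 2 * x * (|u' x| * |u'' x|) := by
        calc |g x| ≤ |u' x ^ 2| + |2 * x * u' x * u'' x| := by
              rw [hgd]; exact abs_add_le _ _
          _ = u' x ^ 2 + 2 * x * (|u' x| * |u'' x|) := by
              rw [abs_of_nonneg (sq_nonneg _), abs_mul, abs_mul, abs_mul, abs_two,
                abs_of_pos hx.1]; ring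
      have s1 : x * (|u' x| * |u'' x|) ≤ (c * a x) * (|u' x| * |u'' x|) :=
        mul_le_mul_of_nonneg_right hxc (mul_nonneg hP hQ)
      have s2 : (2*c*|u' x|) * (a x * |u'' x|) ≤ (2*c*|u' x|) * (|f x| + B * |u' x|) :=
        mul_le_mul_of_nonneg_left fact1 (by positivity)
      have s3 : c * (2 * (|u' x| * |f x|)) ≤ c * (|u' x|^2 + |f x|^2) :=
        mul_le_mul_of_nonneg_left fact2 hc0.le
      have hcP2 : c * |u' x|^2 = c * u' x ^ 2 := by rw [hP2]
      have hcFa2 : c * |f x|^2 = c * f x ^ 2 := by rw [hFa2]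
      have hcBP2 : 2*c*B * |u' x|^2 = 2*c*B * u' x ^ 2 := by rw [hP2]
      rw [Real.norm_eq_abs]
      nlinarith [h0, s1, s2, s3, hcP2, hcFa2, hcBP2]
  -- F has derivative g on (0,1)
  have hFderiv : ∀ t ∈ Set.Ioo (0:ℝ) 1, HasDerivAt F (g t) t := by
    intro t ht
    have h1 : HasDerivAt (fun y => u' y ^ 2) ((2:ℕ) * u' t ^ (2-1) * u'' t) t :=
      (hu' t ht).pow 2
    have h2 : HasDerivAt (fun y => y * u' y ^ 2)
        (1 * u' t ^ 2 + t * ((2:ℕ) * u' t ^ (2-1) * u'' t)) t := (hasDerivAt_id' t).mul h1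
    convert h2 using 1
    show u' t ^ 2 + 2 * t * u' t * u'' t = _; push_cast
    ring
  -- primitive of g
  have hginc : IntegrableOn g (Set.Ioc 0 (1/2:ℝ)) :=
    hgint.mono_set (fun x hx => ⟨hx.1, lt_of_le_of_lt hx.2 (by norm_num)⟩)
  have hgIcc : IntegrableOn g (Set.Icc 0 (1/2:ℝ)) :=
    (integrableOn_Icc_iff_integrableOn_Ioc (ha := by simp)).2 hginc
  set P0 : ℝ → ℝ := fun x => ∫ t in (0:ℝ)..x, g t with hP0d
  have hPcont : ContinuousOn P0 (Set.Icc 0 (1/2:ℝ)) := by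
    have h := intervalIntegral.continuousOn_primitive_interval
      (a := 0) (b := (1/2:ℝ)) (μ := volume) (f := g)
      (by rw [Set.uIcc_of_le (by norm_num : (0:ℝ) ≤ 1/2)]; exact hgIcc)
    rw [Set.uIcc_of_le (by norm_num : (0:ℝ) ≤ 1/2)] at h
    exact h
  -- F x = F(1/2) - P0(1/2) + P0 x on (0,1/2)
  have hFeq : ∀ x ∈ Set.Ioo (0:ℝ) (1/2:ℝ), F x = F (1/2) - P0 (1/2) + P0 x := by
    intro x hx
    have hint1 : IntervalIntegrable g volume 0 x :=
      (intervalIntegrable_iff_integrableOn_Ioc_of_le hx.1.le).2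
        (hginc.mono_set (Set.Ioc_subset_Ioc le_rfl hx.2.le))
    have hint2 : IntervalIntegrable g volume x (1/2) :=
      (intervalIntegrable_iff_integrableOn_Ioc_of_le hx.2.le).2
        (hginc.mono_set (Set.Ioc_subset_Ioc hx.1.le le_rfl))
    have hadd := intervalIntegral.integral_add_adjacent_intervals hint1 hint2
    have hftc : ∫ y in x..(1/2:ℝ), g y = F (1/2) - F x := by
      apply intervalIntegral.integral_eq_sub_of_hasDerivAt _ hint2
      intro t ht
      rw [Set.uIcc_of_le hx.2.le] at ht
      exact hFderiv t ⟨lt_of_lt_of_le hx.1 ht.1, lt_of_le_of_lt ht.2 (by norm_num)⟩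
    have hPx : P0 x = ∫ t in (0:ℝ)..x, g t := rfl
    have hPh : P0 (1/2:ℝ) = ∫ t in (0:ℝ)..(1/2:ℝ), g t := rfl
    rw [← hPx, ← hPh, hftc] at hadd
    linarith
  -- the limit of F at 0⁺ exists
  have hPtend : Tendsto P0 (nhdsWithin 0 (Set.Ioi 0)) (nhds (P0 0)) := by
    have h0 : ContinuousWithinAt P0 (Set.Icc 0 (1/2:ℝ)) 0 :=
      hPcont 0 ⟨le_rfl, by norm_num⟩
    refine Filter.Tendsto.mono_left h0 ?_
    calc nhdsWithin (0:ℝ) (Set.Ioi 0)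
        = nhdsWithin 0 (Set.Ioo 0 (1/2:ℝ)) :=
          (nhdsWithin_Ioo_eq_nhdsGT (by norm_num)).symm
      _ ≤ nhdsWithin 0 (Set.Icc 0 (1/2:ℝ)) := nhdsWithin_mono _ Set.Ioo_subset_Icc_self
  have hP00 : P0 0 = 0 := intervalIntegral.integral_same
  set L : ℝ := F (1/2) - P0 (1/2) with hL
  clear_value L
  have hTF : Tendsto F (nhdsWithin 0 (Set.Ioi 0)) (nhds L) := by
    have h1 : Tendsto (fun x => L + P0 x)
        (nhdsWithin 0 (Set.Ioi 0)) (nhds (L + P0 0)) :=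
      tendsto_const_nhds.add hPtend
    rw [hP00, add_zero] at h1
    apply h1.congr'
    filter_upwards [Ioo_mem_nhdsGT_of_mem
      (show (0:ℝ) ∈ Set.Ico (0:ℝ) (1/2:ℝ) from ⟨le_rfl, by norm_num⟩)] with x hx
    exact (hFeq x hx).symm
  -- L ≥ 0
  have hL0 : 0 ≤ L := by
    apply ge_of_tendsto hTF
    filter_upwards [self_mem_nhdsWithin] with x hx
    exact mul_nonneg (le_of_lt hx) (sq_nonneg _)
  -- ¬ (0 < L)
  have hL1 : ¬ 0 < L := by
    intro hpos
    have hev : ∀ᶠ x in nhdsWithin (0:ℝ) (Set.Ioi 0),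
        L/2 < F x ∧ x ∈ Set.Ioo (0:ℝ) (1/2:ℝ) :=
      (hTF.eventually (eventually_gt_nhds (by linarith : L/2 < L))).and
        (Ioo_mem_nhdsGT_of_mem
          (show (0:ℝ) ∈ Set.Ico (0:ℝ) (1/2:ℝ) from ⟨le_rfl, by norm_num⟩))
    obtain ⟨δ, hδ0, hδsub⟩ := mem_nhdsGT_iff_exists_Ioc_subset.1 hev
    have hδ0' : (0:ℝ) < δ := hδ0
    have hδhalf : δ < 1/2 := (hδsub ⟨hδ0', le_rfl⟩).2.2
    have hinv : IntegrableOn (fun x : ℝ => x⁻¹) (Set.Ioo 0 δ) := by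
      apply Integrable.mono'
        ((hu'L2.mono_set (fun x hx => ⟨hx.1, le_trans hx.2.le (by linarith)⟩ :
          Set.Ioo (0:ℝ) δ ⊆ Set.Ioc 0 1)).const_mul (2/L))
      · exact measurable_inv.aestronglyMeasurable
      · rw [ae_restrict_iff' measurableSet_Ioo]
        refine Filter.Eventually.of_forall fun x hx => ?_
        have hFx : L/2 < x * u' x ^ 2 := (hδsub ⟨hx.1, hx.2.le⟩).1
        rw [Real.norm_eq_abs, abs_of_pos (inv_pos.2 hx.1), ← one_div, div_le_iff₀ hx.1]
        calc (1:ℝ) = 2/L * (L/2) := by field_simp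
          _ ≤ 2/L * (x * u' x ^ 2) :=
              mul_le_mul_of_nonneg_left hFx.le (by positivity)
          _ = 2/L * u' x ^ 2 * x := by ring
    have hrpow : IntegrableOn (fun x : ℝ => x ^ (-1:ℝ)) (Set.Ioo 0 δ) :=
      hinv.congr_fun (fun x _ => (Real.rpow_neg_one x).symm) measurableSet_Ioo
    have := (integrableOn_Ioo_rpow_iff hδ0').1 hrpow
    linarith
  have hLz : L = 0 := le_antisymm (not_lt.1 hL1) hL0
  rwa [hLz] at hTF
end

section
/- Let a,b,η,σ be as in the degenerate setting and suppose x ↦ x^α/a(x) is non-decreasing near 0 for some α with K ≤ α ≤ 2. If u ∈ H^1_{1/σ}(0,1), then lim_{x→0^+} (x/a(x)) |u(x)|^2 = 0. -/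
open MeasureTheory Set Filter intervalIntegral

set_option maxHeartbeats 1000000 in
/-- If x^α/a is non-decreasing near 0 for some α with K ≤ α ≤ 2 and
u ∈ H¹_{1/σ}(0,1), then (x/a(x))|u(x)|² → 0 as x → 0⁺. -/
theorem boundary_limit_xu_sq_div_a (a b η σ u u' : ℝ → ℝ) (K α : ℝ)
    (ha : ContinuousOn a (Set.Icc 0 1)) (hb : ContinuousOn b (Set.Icc 0 1))
    (ha0 : a 0 = 0) (hapos : ∀ x ∈ Set.Ioc (0:ℝ) 1, 0 < a x)
    (ha_diff : ∀ x ∈ Set.Ioc (0:ℝ) 1, HasDerivAt a (deriv a x) x)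
    (hba : MeasureTheory.IntegrableOn (fun s => b s / a s) (Set.Ioc 0 1))
    (hη : ∀ x, η x = Real.exp (∫ s in (1/2:ℝ)..x, b s / a s))
    (hσ : ∀ x, σ x = a x / η x)
    (hKdef : ∀ x ∈ Set.Ioc (0:ℝ) 1, x * |deriv a x| / a x ≤ K)
    (hKα : K ≤ α) (hα2 : α ≤ 2)
    (hαmono : ∃ δ > (0:ℝ), MonotoneOn (fun x => x ^ α / a x) (Set.Ioc 0 δ))
    (hu : ∀ x ∈ Set.Ioo (0:ℝ) 1, HasDerivAt u (u' x) x)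
    (huL2 : MeasureTheory.IntegrableOn (fun x => (u x) ^ 2 / σ x) (Set.Ioc 0 1))
    (hu'L2 : MeasureTheory.IntegrableOn (fun x => (u' x) ^ 2) (Set.Ioc 0 1)) :
    Filter.Tendsto (fun x => x / a x * (u x) ^ 2)
      (nhdsWithin 0 (Set.Ioi 0)) (nhds 0) := by
  obtain ⟨δ₀, hδ₀, hmono⟩ := hαmono
  set c : ℝ := min δ₀ (1/2) with hcdef
  have hc0 : 0 < c := lt_min hδ₀ (by norm_num)
  have hchalf : c ≤ 1/2 := min_le_right _ _
  have hcδ : c ≤ δ₀ := min_le_left _ _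
  have hc1 : c ≤ 1 := le_trans hchalf (by norm_num)
  have hcIoc : c ∈ Set.Ioc (0:ℝ) 1 := ⟨hc0, hc1⟩
  have hac : 0 < a c := hapos c hcIoc
  -- nonnegativity of K
  have hK0 : 0 ≤ K := by
    refine le_trans ?_ (hKdef 1 ⟨one_pos, le_refl 1⟩)
    have h1 : 0 < a 1 := hapos 1 ⟨one_pos, le_refl 1⟩
    positivity
  -- Step A : integrability of u^2 / a on Ioo 0 1
  have hg : IntegrableOn (fun x => u x ^ 2 / a x) (Set.Ioo 0 1) := by
    have hbaabs : IntegrableOn (fun s => |b s / a s|) (Set.Ioc 0 1) := hba.abs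
    set M : ℝ := ∫ x in Set.Ioc (0:ℝ) 1, |b x / a x| with hM
    have hηlb : ∀ x ∈ Set.Ioc (0:ℝ) 1, Real.exp (-M) ≤ η x := by
      intro x hx
      rw [hη x]
      apply Real.exp_le_exp.2
      have hsubI : Set.uIoc (1/2:ℝ) x ⊆ Set.Ioc 0 1 := by
        rw [Set.uIoc]
        intro y hy
        constructor
        · exact lt_trans (lt_min (show (0:ℝ) < 1/2 by norm_num) hx.1) hy.1
        · exact hy.2.trans (max_le (by norm_num) hx.2)
      have h1 : |∫ s in (1/2:ℝ)..x, b s / a s| ≤ ∫ s in Set.uIoc (1/2:ℝ) x, |b s / a s| := by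
        simpa only [Real.norm_eq_abs] using
          intervalIntegral.norm_integral_le_integral_norm_uIoc
            (f := fun s => b s / a s) (a := (1/2:ℝ)) (b := x) (μ := volume)
      have h2 : ∫ s in Set.uIoc (1/2:ℝ) x, |b s / a s| ≤ M := by
        apply setIntegral_mono_set hbaabs
        · exact Filter.Eventually.of_forall fun y => abs_nonneg _
        · exact HasSubset.Subset.eventuallyLE hsubI
      have := abs_le.1 (h1.trans h2)
      linarith [this.1]
    have hu_cont : ContinuousOn u (Set.Ioo 0 1) :=
      fun y hy => (hu y hy).continuousAt.continuousWithinAt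
    have hmeasg : ContinuousOn (fun x => u x ^ 2 / a x) (Set.Ioo 0 1) := by
      apply ContinuousOn.div (hu_cont.pow 2)
        (ha.mono (Set.Ioo_subset_Icc_self))
      intro y hy
      exact (hapos y ⟨hy.1, hy.2.le⟩).ne'
    refine Integrable.mono'
      ((huL2.mono_set Set.Ioo_subset_Ioc_self).const_mul (Real.exp M))
      (hmeasg.aestronglyMeasurable measurableSet_Ioo) ?_
    rw [MeasureTheory.ae_restrict_iff' measurableSet_Ioo]
    refine Filter.Eventually.of_forall fun x hx => ?_
    have hax : 0 < a x := hapos x ⟨hx.1, hx.2.le⟩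
    have hηx : Real.exp (-M) ≤ η x := hηlb x ⟨hx.1, hx.2.le⟩
    have hηpos : 0 < η x := lt_of_lt_of_le (Real.exp_pos _) hηx
    have h1 : 1 ≤ Real.exp M * η x := by
      have h2 : Real.exp M * Real.exp (-M) ≤ Real.exp M * η x :=
        mul_le_mul_of_nonneg_left hηx (Real.exp_pos M).le
      rwa [← Real.exp_add, add_neg_cancel, Real.exp_zero] at h2
    rw [Real.norm_eq_abs, abs_of_nonneg (div_nonneg (sq_nonneg _) hax.le), hσ x]
    have heq : Real.exp M * (u x ^ 2 / (a x / η x)) =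
        (Real.exp M * η x) * (u x ^ 2 / a x) := by
      field_simp
    rw [heq]
    exact le_mul_of_one_le_left (div_nonneg (sq_nonneg _) hax.le) h1
  -- Step B : bound on x^2 / a x
  set C : ℝ := c ^ 2 / a c with hCdef
  have hC : ∀ x ∈ Set.Ioc (0:ℝ) c, x ^ 2 / a x ≤ C := by
    intro x hx
    have hax : 0 < a x := hapos x ⟨hx.1, hx.2.trans hc1⟩
    have hmx : x ^ α / a x ≤ c ^ α / a c :=
      hmono ⟨hx.1, hx.2.trans hcδ⟩ ⟨hc0, hcδ⟩ hx.2
    have h2 : x ^ (2 - α) ≤ c ^ (2 - α) :=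
      Real.rpow_le_rpow hx.1.le hx.2 (by linarith)
    have hcast : ((2:ℕ):ℝ) = (2 - α) + α := by push_cast; ring
    have hxsplit : x ^ (2:ℕ) = x ^ (2 - α) * x ^ α := by
      rw [← Real.rpow_natCast x 2, hcast, Real.rpow_add hx.1]
    have hcsplit : c ^ (2:ℕ) = c ^ (2 - α) * c ^ α := by
      rw [← Real.rpow_natCast c 2, hcast, Real.rpow_add hc0]
    rw [hCdef]
    calc x ^ 2 / a x = x ^ (2 - α) * (x ^ α / a x) := by
          rw [hxsplit]; ring
      _ ≤ c ^ (2 - α) * (c ^ α / a c) :=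
          mul_le_mul h2 hmx (div_nonneg (Real.rpow_nonneg hx.1.le _) hax.le)
            (Real.rpow_nonneg hc0.le _)
      _ = c ^ 2 / a c := by rw [hcsplit]; ring
  -- derivative of φ
  set φ : ℝ → ℝ := fun x => x / a x * u x ^ 2 with hφdef
  set D : ℝ → ℝ := fun x =>
    (1 * a x - x * deriv a x) / (a x) ^ 2 * u x ^ 2 + x / a x * (2 * u x ^ 1 * u' x) with hDdef
  have hderiv : ∀ x ∈ Set.Ioo (0:ℝ) 1, HasDerivAt φ (D x) x := by
    intro x hx
    have hax : 0 < a x := hapos x ⟨hx.1, hx.2.le⟩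
    have h1 : HasDerivAt (fun y => y / a y) ((1 * a x - x * deriv a x) / (a x) ^ 2) x :=
      (hasDerivAt_id x).div (ha_diff x ⟨hx.1, hx.2.le⟩) hax.ne'
    have h2 : HasDerivAt (fun y => u y ^ 2) (2 * u x ^ 1 * u' x) x := by
      simpa using (hu x hx).fun_pow 2
    simpa [hDdef, mul_comm, mul_assoc, mul_left_comm] using h1.fun_mul h2
  -- bound on |D|
  have hDbound : ∀ x ∈ Set.Ioc (0:ℝ) c, |D x| ≤ (2 + K) * (u x ^ 2 / a x) + C * u' x ^ 2 := by
    intro x hx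
    have hax : 0 < a x := hapos x ⟨hx.1, hx.2.trans hc1⟩
    have hxpos : 0 < x := hx.1
    have hKx : x * |deriv a x| ≤ K * a x := by
      have h := hKdef x ⟨hx.1, hx.2.trans hc1⟩
      rw [div_le_iff₀ hax] at h
      linarith
    have hCx : x ^ 2 / a x ≤ C := hC x hx
    have hp1 : x * deriv a x ≤ x * |deriv a x| :=
      mul_le_mul_of_nonneg_left (le_abs_self _) hxpos.le
    have hp2 : -(x * |deriv a x|) ≤ x * deriv a x := by
      have := mul_le_mul_of_nonneg_left (neg_abs_le (deriv a x)) hxpos.le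
      linarith
    have hnum : |1 * a x - x * deriv a x| ≤ (1 + K) * a x :=
      abs_le.2 ⟨by nlinarith, by nlinarith⟩
    have h1 : |(1 * a x - x * deriv a x) / a x ^ 2 * u x ^ 2| ≤
        (1 + K) * (u x ^ 2 / a x) := by
      rw [abs_mul, abs_div, abs_of_pos (pow_pos hax 2),
        abs_of_nonneg (sq_nonneg (u x))]
      have heq : (1 + K) * (u x ^ 2 / a x) = ((1 + K) * a x) / a x ^ 2 * u x ^ 2 := by
        field_simp
      rw [heq]
      exact mul_le_mul_of_nonneg_right
        ((div_le_div_iff_of_pos_right (pow_pos hax 2)).2 hnum) (sq_nonneg _)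
    have h2 : |x / a x * (2 * u x ^ 1 * u' x)| ≤ u x ^ 2 / a x + C * u' x ^ 2 := by
      rw [abs_mul, abs_of_pos (div_pos hxpos hax)]
      have hkey : x * |2 * u x ^ 1 * u' x| ≤ u x ^ 2 + x ^ 2 * u' x ^ 2 := by
        rcases abs_cases (2 * u x ^ 1 * u' x) with ⟨h, _⟩ | ⟨h, _⟩ <;> rw [h] <;>
          nlinarith [sq_nonneg (u x - x * u' x), sq_nonneg (u x + x * u' x)]
      calc x / a x * |2 * u x ^ 1 * u' x|
          = x * |2 * u x ^ 1 * u' x| / a x := by ring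
        _ ≤ (u x ^ 2 + x ^ 2 * u' x ^ 2) / a x :=
            (div_le_div_iff_of_pos_right hax).2 hkey
        _ = u x ^ 2 / a x + x ^ 2 / a x * u' x ^ 2 := by ring
        _ ≤ u x ^ 2 / a x + C * u' x ^ 2 := by
            have := mul_le_mul_of_nonneg_right hCx (sq_nonneg (u' x))
            linarith
    calc |D x| ≤ |(1 * a x - x * deriv a x) / a x ^ 2 * u x ^ 2| +
          |x / a x * (2 * u x ^ 1 * u' x)| := abs_add_le _ _
      _ ≤ (1 + K) * (u x ^ 2 / a x) + (u x ^ 2 / a x + C * u' x ^ 2) :=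
          add_le_add h1 h2
      _ = (2 + K) * (u x ^ 2 / a x) + C * u' x ^ 2 := by ring
  -- integrability of D near 0
  have hDint : IntegrableOn D (Set.Ioc 0 c) := by
    rw [integrableOn_Ioc_iff_integrableOn_Ioo]
    have hIoosub : Set.Ioo (0:ℝ) c ⊆ Set.Ioo 0 1 :=
      Set.Ioo_subset_Ioo_right (lt_of_le_of_lt hchalf (by norm_num)).le
    have hu_cont : ContinuousOn u (Set.Ioo 0 1) :=
      fun y hy => (hu y hy).continuousAt.continuousWithinAt
    have hma : AEMeasurable a (volume.restrict (Set.Ioo 0 c)) :=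
      ((ha.mono ((hIoosub.trans Set.Ioo_subset_Icc_self))).aemeasurable measurableSet_Ioo)
    have hmu : AEMeasurable u (volume.restrict (Set.Ioo 0 c)) :=
      ((hu_cont.mono hIoosub).aemeasurable measurableSet_Ioo)
    have hmda : AEMeasurable (deriv a) (volume.restrict (Set.Ioo 0 c)) :=
      (measurable_deriv a).aemeasurable
    have hmdu : AEMeasurable (deriv u) (volume.restrict (Set.Ioo 0 c)) :=
      (measurable_deriv u).aemeasurable
    have hmid : AEMeasurable (fun x : ℝ => x) (volume.restrict (Set.Ioo 0 c)) :=
      aemeasurable_id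
    have hD'meas : AEMeasurable (fun x =>
        (1 * a x - x * deriv a x) / a x ^ 2 * u x ^ 2 +
          x / a x * (2 * u x ^ 1 * deriv u x)) (volume.restrict (Set.Ioo 0 c)) := by
      exact ((((aemeasurable_const.mul hma).sub (hmid.mul hmda)).div
        (hma.pow_const 2)).mul (hmu.pow_const 2)).add
        ((hmid.div hma).mul ((aemeasurable_const.mul
          (hmu.pow_const 1)).mul hmdu))
    have hmeasD : AEStronglyMeasurable D (volume.restrict (Set.Ioo 0 c)) := by
      refine hD'meas.aestronglyMeasurable.congr ?_
      refine (MeasureTheory.ae_restrict_iff' measurableSet_Ioo).2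
        (Filter.Eventually.of_forall fun x hx => ?_)
      have hd : deriv u x = u' x := (hu x (hIoosub hx)).deriv
      show _ = D x
      rw [hDdef]
      simp only [hd]
    refine Integrable.mono' (g := fun x => (2 + K) * (u x ^ 2 / a x) + C * u' x ^ 2) ?_ hmeasD ?_
    · exact (((hg.mono_set hIoosub).const_mul (2 + K)).add
        ((hu'L2.mono_set (fun y hy => ⟨(hIoosub hy).1, (hIoosub hy).2.le⟩)).const_mul C))
    · rw [MeasureTheory.ae_restrict_iff' measurableSet_Ioo]
      refine Filter.Eventually.of_forall fun x hx => ?_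
      simpa [Real.norm_eq_abs] using hDbound x ⟨hx.1, hx.2.le⟩
  -- FTC
  have hFTC : ∀ x ∈ Set.Ioc (0:ℝ) c, φ x = φ c - ∫ y in x..c, D y := by
    intro x hx
    have hsub : Set.uIcc x c ⊆ Set.Ioo (0:ℝ) 1 := by
      rw [Set.uIcc_of_le hx.2]
      intro y hy
      exact ⟨lt_of_lt_of_le hx.1 hy.1, lt_of_le_of_lt hy.2 (lt_of_le_of_lt hchalf (by norm_num))⟩
    have hint : IntervalIntegrable D MeasureTheory.volume x c := by
      rw [intervalIntegrable_iff_integrableOn_Ioc_of_le hx.2]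
      exact hDint.mono_set (Set.Ioc_subset_Ioc_left hx.1.le)
    have := intervalIntegral.integral_eq_sub_of_hasDerivAt
      (fun y hy => hderiv y (hsub hy)) hint
    linarith [this]
  -- limit of the primitive
  have hPtend : Filter.Tendsto (fun x => ∫ y in x..c, D y) (nhdsWithin 0 (Set.Ioi 0))
      (nhds (∫ y in (0:ℝ)..c, D y)) := by
    have hIcc : IntegrableOn D (Set.uIcc 0 c) := by
      rw [Set.uIcc_of_le hc0.le, integrableOn_Icc_iff_integrableOn_Ioc]
      exact hDint
    have hcont := intervalIntegral.continuousOn_primitive_interval_left hIcc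
    have h0 : (0:ℝ) ∈ Set.uIcc (0:ℝ) c := Set.left_mem_uIcc
    have := (hcont 0 h0).tendsto
    rw [Set.uIcc_of_le hc0.le] at this
    have hmono' : nhdsWithin (0:ℝ) (Set.Ioc 0 c) ≤ nhdsWithin 0 (Set.Icc 0 c) :=
      nhdsWithin_mono _ Set.Ioc_subset_Icc_self
    rw [nhdsWithin_Ioc_eq_nhdsGT hc0] at hmono'
    exact this.mono_left hmono'
  set L : ℝ := φ c - ∫ y in (0:ℝ)..c, D y with hLdef
  have hφtend : Filter.Tendsto φ (nhdsWithin 0 (Set.Ioi 0)) (nhds L) := by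
    have h1 : Filter.Tendsto (fun x => φ c - ∫ y in x..c, D y) (nhdsWithin 0 (Set.Ioi 0))
        (nhds L) := tendsto_const_nhds.sub hPtend
    refine h1.congr' ?_
    filter_upwards [Ioc_mem_nhdsGT hc0] with x hx
    exact (hFTC x hx).symm
  -- the limit is zero
  have hL0 : L = 0 := by
    have hLge : 0 ≤ L := by
      refine ge_of_tendsto hφtend ?_
      filter_upwards [Ioc_mem_nhdsGT hc0] with x hx
      have hax : 0 < a x := hapos x ⟨hx.1, hx.2.trans hc1⟩
      have h1 : 0 ≤ x / a x := div_nonneg hx.1.le hax.le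
      exact mul_nonneg h1 (sq_nonneg _)
    rcases eq_or_lt_of_le hLge with h | hLpos
    · exact h.symm
    exfalso
    have hev : ∀ᶠ x in nhdsWithin (0:ℝ) (Set.Ioi 0), L / 2 ≤ φ x ∧ x ∈ Set.Ioc (0:ℝ) c := by
      filter_upwards [hφtend.eventually (eventually_ge_nhds (by linarith : L / 2 < L)),
        Ioc_mem_nhdsGT hc0] with x h1 h2
      exact ⟨h1, h2⟩
    obtain ⟨ε, hε, hsub⟩ := mem_nhdsGT_iff_exists_Ioc_subset.1 hev
    have hε0 : 0 < ε := hε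
    have hinv : IntegrableOn (fun x => x⁻¹) (Set.Ioo 0 ε) := by
      have hgε : IntegrableOn (fun x => (2 / L) * (u x ^ 2 / a x)) (Set.Ioo 0 ε) := by
        refine (hg.mono_set ?_).const_mul _
        exact Set.Ioo_subset_Ioo_right (le_trans (hsub (Set.mem_Ioc.2 ⟨hε0, le_refl ε⟩)).2.2 hc1)
      refine hgε.mono' (measurable_inv.aestronglyMeasurable) ?_
      rw [MeasureTheory.ae_restrict_iff' measurableSet_Ioo]
      refine Filter.Eventually.of_forall fun x hx => ?_
      have hx' := hsub (Set.mem_Ioc.2 ⟨hx.1, hx.2.le⟩)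
      have hax : 0 < a x := hapos x ⟨hx.1, hx'.2.2.trans hc1⟩
      have hφx : L / 2 ≤ x / a x * u x ^ 2 := hx'.1
      have hxpos : 0 < x := hx.1
      have key : L / 2 * a x ≤ x * u x ^ 2 := by
        rw [show x / a x * u x ^ 2 = x * u x ^ 2 / a x by ring, le_div_iff₀ hax] at hφx
        linarith
      have hLa : (0:ℝ) < L * a x := mul_pos hLpos hax
      have hR : 2 / L * (u x ^ 2 / a x) = 2 * u x ^ 2 / (L * a x) :=
        div_mul_div_comm 2 L (u x ^ 2) (a x)
      rw [Real.norm_eq_abs, abs_of_pos (inv_pos.2 hxpos), hR, inv_eq_one_div,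
        div_le_div_iff₀ hxpos hLa]
      nlinarith
    have : IntegrableOn (fun x : ℝ => x ^ (-1:ℝ)) (Set.Ioo 0 ε) := by
      refine hinv.congr_fun (fun x hx => ?_) measurableSet_Ioo
      rw [Real.rpow_neg_one]
    rw [integrableOn_Ioo_rpow_iff hε0] at this
    linarith
  rw [hL0] at hφtend
  exact hφtend
end

section
/- Let λ ∈ ℝ, λ ≠ 0, and let y ∈ H^2(1,L), g^3, g^4 ∈ L^2(1,L) satisfy λ^2 y + y'' = −(g^4 + iλ g^3) on (1,L). Then for any real affine function g_{α,β}(x) = (α+β)x − (α+βL), multiplying by −2 g_{α,β} \bar{y}' and taking real parts gives the identity: ∫_1^L g'_{α,β}(|λy|^2 + |y'|^2) dx − g_{α,β}(L)(|λy(L)|^2 + |y'(L)|^2) + g_{α,β}(1)(|λy(1)|^2 + |y'(1)|^2) = 2Re∫_1^L g^4 g_{α,β} \bar{y}' dx − 2Re(iλ∫_1^L g^3_x g_{α,β}\bar{y} dx) − 2Re(iλ∫_1^L g^3 g'_{α,β} \bar{y} dx) + 2Re[iλ g^3(L) g_{α,β}(L)\bar{y}(L)] − 2Re[iλ g^3(1)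 g_{α,β}(1)\bar{y}(1)], provided g^3 ∈ H^1(1,L). -/
open ComplexConjugate

/-- Multiplier identity for λ²y + y'' = -(g⁴ + iλg³) on (1,L) with the affine
multiplier g_{α,β}(x) = (α+β)x - (α+βL). -/
theorem multiplier_identity (L lam α β : ℝ) (hL : 1 < L) (hlam : lam ≠ 0)
    (y y' y'' g3 g3' g4 : ℝ → ℂ)
    (hy : ∀ x ∈ Set.Icc (1:ℝ) L, HasDerivWithinAt y (y' x) (Set.Icc 1 L) x)
    (hy' : ∀ x ∈ Set.Icc (1:ℝ) L, HasDerivWithinAt y' (y'' x) (Set.Icc 1 L) x)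
    (hg3 : ∀ x ∈ Set.Icc (1:ℝ) L, HasDerivWithinAt g3 (g3' x) (Set.Icc 1 L) x)
    (hy''c : ContinuousOn y'' (Set.Icc 1 L))
    (hg3'c : ContinuousOn g3' (Set.Icc 1 L))
    (hg4c : ContinuousOn g4 (Set.Icc 1 L))
    (heq : ∀ x ∈ Set.Icc (1:ℝ) L,
      (lam ^ 2 : ℂ) * y x + y'' x = -(g4 x + Complex.I * lam * g3 x)) :
    (∫ x in (1:ℝ)..L, (α + β) * (‖(lam : ℂ) * y x‖ ^ 2 + ‖y' x‖ ^ 2))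
      - ((α + β) * L - (α + β * L)) * (‖(lam : ℂ) * y L‖ ^ 2 + ‖y' L‖ ^ 2)
      + ((α + β) * 1 - (α + β * L)) * (‖(lam : ℂ) * y 1‖ ^ 2 + ‖y' 1‖ ^ 2)
    = 2 * (∫ x in (1:ℝ)..L,
          g4 x * (((α + β) * x - (α + β * L) : ℝ) : ℂ) * conj (y' x)).re
      - 2 * (Complex.I * lam * ∫ x in (1:ℝ)..L,
          g3' x * (((α + β) * x - (α + β * L) : ℝ) : ℂ) * conj (y x)).re
      - 2 * (Complex.I * lam * ∫ x in (1:ℝ)..L,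
          g3 x * ((α + β : ℝ) : ℂ) * conj (y x)).re
      + 2 * (Complex.I * lam * g3 L *
          (((α + β) * L - (α + β * L) : ℝ) : ℂ) * conj (y L)).re
      - 2 * (Complex.I * lam * g3 1 *
          (((α + β) * 1 - (α + β * L) : ℝ) : ℂ) * conj (y 1)).re := by
  have hab : (1:ℝ) ≤ L := hL.le
  have huIcc : Set.uIcc (1:ℝ) L = Set.Icc 1 L := Set.uIcc_of_le hab
  have h1m : (1:ℝ) ∈ Set.Icc (1:ℝ) L := ⟨le_refl _, hab⟩
  have hLm : L ∈ Set.Icc (1:ℝ) L := ⟨hab, le_refl _⟩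
  -- abbreviations matching the goal
  set A : ℝ → ℝ := fun x => (α + β) * (‖(lam : ℂ) * y x‖ ^ 2 + ‖y' x‖ ^ 2) with hAdef
  set fb : ℝ → ℂ := fun x => g4 x * (((α + β) * x - (α + β * L) : ℝ) : ℂ) * conj (y' x) with hfbdef
  set fc : ℝ → ℂ := fun x => g3' x * (((α + β) * x - (α + β * L) : ℝ) : ℂ) * conj (y x) with hfcdef
  set fe : ℝ → ℂ := fun x => g3 x * ((α + β : ℝ) : ℂ) * conj (y x) with hfedef
  -- the multiplier function
  have hgd : ∀ x : ℝ, HasDerivAt (fun t : ℝ => (((α + β) * t - (α + β * L) : ℝ) : ℂ))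
      ((α + β : ℝ) : ℂ) x := by
    intro x
    have h : HasDerivAt (fun t : ℝ => (α + β) * t - (α + β * L)) (α + β) x := by
      simpa using ((hasDerivAt_id x).const_mul (α + β)).sub_const (α + β * L)
    exact h.ofReal_comp
  have hgCont : Continuous (fun t : ℝ => (((α + β) * t - (α + β * L) : ℝ) : ℂ)) := by
    fun_prop
  -- continuity of the data
  have hyc : ContinuousOn y (Set.Icc 1 L) := fun x hx => (hy x hx).continuousWithinAt
  have hy'c : ContinuousOn y' (Set.Icc 1 L) := fun x hx => (hy' x hx).continuousWithinAt
  have hg3c : ContinuousOn g3 (Set.Icc 1 L) := fun x hx => (hg3 x hx).continuousWithinAt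
  -- the potential Φ and its derivative D
  set Φ : ℝ → ℂ := fun x =>
      (((α + β) * x - (α + β * L) : ℝ) : ℂ) * ((lam:ℂ)^2 * (y x * conj (y x)) + y' x * conj (y' x))
      + (2 * Complex.I * lam) * (g3 x * ((((α + β) * x - (α + β * L) : ℝ) : ℂ) * conj (y x))) with hPhidef
  set D : ℝ → ℂ := fun x =>
      ((α + β : ℝ) : ℂ) * ((lam:ℂ)^2 * (y x * conj (y x)) + y' x * conj (y' x))
      + (((α + β) * x - (α + β * L) : ℝ) : ℂ) *
          ((lam:ℂ)^2 * (y' x * conj (y x) + y x * conj (y' x))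
            + (y'' x * conj (y' x) + y' x * conj (y'' x)))
      + (2 * Complex.I * lam) * (g3' x * ((((α + β) * x - (α + β * L) : ℝ) : ℂ) * conj (y x))
          + g3 x * (((α + β : ℝ) : ℂ) * conj (y x)
              + (((α + β) * x - (α + β * L) : ℝ) : ℂ) * conj (y' x))) with hDdef
  have hPhiDeriv : ∀ x ∈ Set.Icc (1:ℝ) L, HasDerivWithinAt Φ (D x) (Set.Icc 1 L) x := by
    intro x hx
    have hyst : HasDerivWithinAt (fun t => conj (y t)) (conj (y' x)) (Set.Icc 1 L) x :=
      (hy x hx).star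
    have hy'st : HasDerivWithinAt (fun t => conj (y' t)) (conj (y'' x)) (Set.Icc 1 L) x :=
      (hy' x hx).star
    have h1 : HasDerivWithinAt
        (fun t => (lam:ℂ)^2 * (y t * conj (y t)) + y' t * conj (y' t))
        ((lam:ℂ)^2 * (y' x * conj (y x) + y x * conj (y' x))
          + (y'' x * conj (y' x) + y' x * conj (y'' x))) (Set.Icc 1 L) x :=
      (((hy x hx).mul hyst).const_mul ((lam:ℂ)^2)).add ((hy' x hx).mul hy'st)
    have h2 : HasDerivWithinAt
        (fun t => g3 t * ((((α + β) * t - (α + β * L) : ℝ) : ℂ) * conj (y t)))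
        (g3' x * ((((α + β) * x - (α + β * L) : ℝ) : ℂ) * conj (y x))
          + g3 x * (((α + β : ℝ) : ℂ) * conj (y x)
              + (((α + β) * x - (α + β * L) : ℝ) : ℂ) * conj (y' x))) (Set.Icc 1 L) x :=
      (hg3 x hx).mul ((hgd x).hasDerivWithinAt.mul hyst)
    have h3 := ((hgd x).hasDerivWithinAt.mul h1).add (h2.const_mul (2 * Complex.I * lam))
    exact h3
  -- FTC
  have hPhic : ContinuousOn Φ (Set.Icc 1 L) := fun x hx => (hPhiDeriv x hx).continuousWithinAt
  have hycst : ContinuousOn (fun x => conj (y x)) (Set.Icc 1 L) := hyc.star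
  have hy'cst : ContinuousOn (fun x => conj (y' x)) (Set.Icc 1 L) := hy'c.star
  have hy''cst : ContinuousOn (fun x => conj (y'' x)) (Set.Icc 1 L) := hy''c.star
  have hDc : ContinuousOn D (Set.Icc 1 L) := by
    simp only [hDdef]
    exact (ContinuousOn.add
      (ContinuousOn.add
        (continuousOn_const.mul ((continuousOn_const.mul (hyc.mul hycst)).add (hy'c.mul hy'cst)))
        ((hgCont.continuousOn).mul ((continuousOn_const.mul ((hy'c.mul hycst).add (hyc.mul hy'cst))).add ((hy''c.mul hy'cst).add (hy'c.mul hy''cst)))))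
      (continuousOn_const.mul ((hg3'c.mul (hgCont.continuousOn.mul hycst)).add
        (hg3c.mul ((continuousOn_const.mul hycst).add (hgCont.continuousOn.mul hy'cst))))))
  have hDint : IntervalIntegrable D MeasureTheory.volume 1 L := by
    apply ContinuousOn.intervalIntegrable; rw [huIcc]; exact hDc
  have hFTC : ∫ x in (1:ℝ)..L, D x = Φ L - Φ 1 := by
    apply intervalIntegral.integral_eq_sub_of_hasDeriv_right_of_le hab hPhic _ hDint
    intro x hx
    exact ((hPhiDeriv x ⟨hx.1.le, hx.2.le⟩).hasDerivAt
      (Icc_mem_nhds hx.1 hx.2)).hasDerivWithinAt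
  -- key pointwise identity for the real part of D
  have hkey : ∀ x ∈ Set.Icc (1:ℝ) L, (D x).re
      = A x - 2 * (fb x).re + 2 * (Complex.I * ↑lam * fc x).re
        + 2 * (Complex.I * ↑lam * fe x).re := by
    intro x hx
    have hy2 : y'' x = -(g4 x + Complex.I * lam * g3 x) - (lam ^ 2 : ℂ) * y x := by
      linear_combination heq x hx
    simp only [hDdef, hAdef, hfbdef, hfcdef, hfedef, hy2]
    simp only [← Complex.ofReal_pow, Complex.sq_norm, Complex.normSq_apply,
      Complex.mul_re, Complex.mul_im, Complex.add_re, Complex.add_im, Complex.sub_re,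
      Complex.sub_im, Complex.neg_re, Complex.neg_im, Complex.conj_re, Complex.conj_im,
      Complex.I_re, Complex.I_im, Complex.ofReal_re, Complex.ofReal_im, Complex.re_ofNat,
      Complex.im_ofNat]
    simp only [pow_two, Complex.mul_re, Complex.mul_im, Complex.ofReal_re, Complex.ofReal_im]
    ring
  -- integrability of the pieces
  have hAc : ContinuousOn A (Set.Icc 1 L) := by
    simp only [hAdef]
    exact continuousOn_const.mul
      (((continuousOn_const.mul hyc).norm.pow 2).add ((hy'c.norm).pow 2))
  have hAi : IntervalIntegrable A MeasureTheory.volume 1 L := by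
    apply ContinuousOn.intervalIntegrable; rw [huIcc]; exact hAc
  have hfbc : ContinuousOn fb (Set.Icc 1 L) := by
    simp only [hfbdef]; exact (hg4c.mul hgCont.continuousOn).mul hy'cst
  have hfcc : ContinuousOn fc (Set.Icc 1 L) := by
    simp only [hfcdef]; exact (hg3'c.mul hgCont.continuousOn).mul hycst
  have hfec : ContinuousOn fe (Set.Icc 1 L) := by
    simp only [hfedef]; exact (hg3c.mul continuousOn_const).mul hycst
  have hfbi : IntervalIntegrable fb MeasureTheory.volume 1 L := by
    apply ContinuousOn.intervalIntegrable; rw [huIcc]; exact hfbc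
  have hfci : IntervalIntegrable fc MeasureTheory.volume 1 L := by
    apply ContinuousOn.intervalIntegrable; rw [huIcc]; exact hfcc
  have hfei : IntervalIntegrable fe MeasureTheory.volume 1 L := by
    apply ContinuousOn.intervalIntegrable; rw [huIcc]; exact hfec
  have hbi : IntervalIntegrable (fun x => (fb x).re) MeasureTheory.volume 1 L := by
    apply ContinuousOn.intervalIntegrable; rw [huIcc]
    exact Complex.continuous_re.comp_continuousOn hfbc
  have hci : IntervalIntegrable (fun x => (Complex.I * ↑lam * fc x).re)
      MeasureTheory.volume 1 L := by
    apply ContinuousOn.intervalIntegrable; rw [huIcc]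
    exact Complex.continuous_re.comp_continuousOn (continuousOn_const.mul hfcc)
  have hei : IntervalIntegrable (fun x => (Complex.I * ↑lam * fe x).re)
      MeasureTheory.volume 1 L := by
    apply ContinuousOn.intervalIntegrable; rw [huIcc]
    exact Complex.continuous_re.comp_continuousOn (continuousOn_const.mul hfec)
  -- real part of the FTC identity
  have hDre : (∫ x in (1:ℝ)..L, D x).re = ∫ x in (1:ℝ)..L, (D x).re := by
    simpa using (Complex.reCLM.intervalIntegral_comp_comm hDint).symm
  have hFTCre : ∫ x in (1:ℝ)..L, (D x).re = (Φ L).re - (Φ 1).re := by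
    rw [← hDre, hFTC, Complex.sub_re]
  -- splitting the integral of (D x).re
  have hsplit : ∫ x in (1:ℝ)..L, (D x).re
      = (∫ x in (1:ℝ)..L, A x) - 2 * (∫ x in (1:ℝ)..L, (fb x).re)
        + 2 * (∫ x in (1:ℝ)..L, (Complex.I * ↑lam * fc x).re)
        + 2 * (∫ x in (1:ℝ)..L, (Complex.I * ↑lam * fe x).re) := by
    rw [show (∫ x in (1:ℝ)..L, (D x).re)
        = ∫ x in (1:ℝ)..L, (A x - 2 * (fb x).re + 2 * (Complex.I * ↑lam * fc x).re
            + 2 * (Complex.I * ↑lam * fe x).re) from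
      intervalIntegral.integral_congr (fun x hx => hkey x (by rwa [huIcc] at hx))]
    rw [intervalIntegral.integral_add ((hAi.sub (hbi.const_mul 2)).add (hci.const_mul 2))
        (hei.const_mul 2),
      intervalIntegral.integral_add (hAi.sub (hbi.const_mul 2)) (hci.const_mul 2),
      intervalIntegral.integral_sub hAi (hbi.const_mul 2),
      intervalIntegral.integral_const_mul]
    simp only [intervalIntegral.integral_const_mul]
  -- moving re inside the integrals
  have hre1 : (∫ x in (1:ℝ)..L, fb x).re = ∫ x in (1:ℝ)..L, (fb x).re := by
    simpa using (Complex.reCLM.intervalIntegral_comp_comm hfbi).symm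
  have hre2 : (Complex.I * ↑lam * ∫ x in (1:ℝ)..L, fc x).re
      = ∫ x in (1:ℝ)..L, (Complex.I * ↑lam * fc x).re := by
    rw [← intervalIntegral.integral_const_mul]
    simpa only [Complex.reCLM_apply] using
      (Complex.reCLM.intervalIntegral_comp_comm (hfci.const_mul (Complex.I * ↑lam))).symm
  have hre3 : (Complex.I * ↑lam * ∫ x in (1:ℝ)..L, fe x).re
      = ∫ x in (1:ℝ)..L, (Complex.I * ↑lam * fe x).re := by
    rw [← intervalIntegral.integral_const_mul]
    simpa only [Complex.reCLM_apply] using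
      (Complex.reCLM.intervalIntegral_comp_comm (hfei.const_mul (Complex.I * ↑lam))).symm
  -- boundary values of Φ
  have hbL : (Φ L).re
      = ((α + β) * L - (α + β * L)) * (‖(lam : ℂ) * y L‖ ^ 2 + ‖y' L‖ ^ 2)
        + 2 * (Complex.I * lam * g3 L *
            (((α + β) * L - (α + β * L) : ℝ) : ℂ) * conj (y L)).re := by
    simp only [hPhidef]
    simp only [← Complex.ofReal_pow, Complex.sq_norm, Complex.normSq_apply,
      Complex.mul_re, Complex.mul_im, Complex.add_re, Complex.add_im, Complex.sub_re,
      Complex.sub_im, Complex.neg_re, Complex.neg_im, Complex.conj_re, Complex.conj_im,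
      Complex.I_re, Complex.I_im, Complex.ofReal_re, Complex.ofReal_im, Complex.re_ofNat,
      Complex.im_ofNat]
    simp only [pow_two, Complex.mul_re, Complex.mul_im, Complex.ofReal_re, Complex.ofReal_im]
    ring
  have hb1 : (Φ 1).re
      = ((α + β) * 1 - (α + β * L)) * (‖(lam : ℂ) * y 1‖ ^ 2 + ‖y' 1‖ ^ 2)
        + 2 * (Complex.I * lam * g3 1 *
            (((α + β) * 1 - (α + β * L) : ℝ) : ℂ) * conj (y 1)).re := by
    simp only [hPhidef]
    simp only [← Complex.ofReal_pow, Complex.sq_norm, Complex.normSq_apply,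
      Complex.mul_re, Complex.mul_im, Complex.add_re, Complex.add_im, Complex.sub_re,
      Complex.sub_im, Complex.neg_re, Complex.neg_im, Complex.conj_re, Complex.conj_im,
      Complex.I_re, Complex.I_im, Complex.ofReal_re, Complex.ofReal_im, Complex.re_ofNat,
      Complex.im_ofNat]
    simp only [pow_two, Complex.mul_re, Complex.mul_im, Complex.ofReal_re, Complex.ofReal_im]
    ring
  rw [hre1, hre2, hre3]
  linarith [hFTCre, hsplit, hbL, hb1]
end
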